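/- arXiv:2309.07774 — 8 statements merged into one kernel-verified Lean document; each statement's English description precedes it below -/
import Mathlib

section
/- Let b < b₀ be real numbers and let (Y_n)_{n≥0} be a supermartingale (with respect to its natural filtration) such that Y_0 = b₀, the increments Y_{n+1} − Y_n take values in {−1, 0, 1}, and there exists p' > 0 such that P(Y_{n+1} − Y_n = −1 | Y_0, …, Y_n) > p' for all n. Define the stopping time τ = inf{n : Y_n ≤ b}. Then P(τ < ∞) = 1. -/
open MeasureTheory Filter

/-- Let `b < b₀` be real numbers and let `(Y_n)` be a supermartingale
with respect to its natural filtration, with `Y 0 = b₀`, increments in `{-1, 0, 1}`,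
and such that for some `p' > 0` the conditional probability (given `Y_0, …, Y_n`) that
the next increment equals `-1` exceeds `p'`.  Then the hitting time
`τ = inf {n | Y n ≤ b}` is almost surely finite, i.e. almost surely some `Y n ≤ b`. -/
theorem supermartingale_hitting_time_finite
    {Ω : Type*} {m : MeasurableSpace Ω} {μ : Measure Ω} [IsProbabilityMeasure μ]
    (Y : ℕ → Ω → ℝ) (hY : ∀ n, StronglyMeasurable (Y n))
    (b b₀ : ℝ) (hb : b < b₀)
    (hsuper : Supermartingale Y (Filtration.natural Y hY) μ)
    (hY0 : ∀ ω, Y 0 ω = b₀)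
    (hstep : ∀ n ω, Y (n + 1) ω - Y n ω = -1 ∨ Y (n + 1) ω - Y n ω = 0 ∨
      Y (n + 1) ω - Y n ω = 1)
    (p' : ℝ) (hp' : 0 < p')
    (hdown : ∀ n, ∀ᵐ ω ∂μ,
      p' < (μ[Set.indicator {ω' | Y (n + 1) ω' - Y n ω' = -1} (fun _ => (1 : ℝ)) |
        Filtration.natural Y hY n]) ω) :
    ∀ᵐ ω ∂μ, ∃ n, Y n ω ≤ b := by
  set ℱ := Filtration.natural Y hY with hℱ
  -- the difference steps are bounded by 1 in absolute value
  have habs : ∀ i ω, |Y (i + 1) ω - Y i ω| ≤ (1 : ℝ) := by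
    intro i ω
    rcases hstep i ω with h | h | h <;> rw [h] <;> norm_num
  -- the sets of "-1 steps"
  set s : ℕ → Set Ω := fun n =>
    Nat.rec ∅ (fun k _ => {ω' | Y (k + 1) ω' - Y k ω' = -1}) n with hs
  have hs0 : s 0 = ∅ := rfl
  have hsk : ∀ k, s (k + 1) = {ω' | Y (k + 1) ω' - Y k ω' = -1} := fun k => rfl
  have hsmeas : ∀ n, MeasurableSet[ℱ n] (s n) := by
    intro n
    cases n with
    | zero => exact @MeasurableSet.empty _ (ℱ 0)
    | succ k =>
      rw [hsk]
      have h1 : StronglyMeasurable[ℱ (k + 1)] (Y (k + 1)) :=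
        Filtration.stronglyAdapted_natural hY (k + 1)
      have h2 : StronglyMeasurable[ℱ (k + 1)] (Y k) :=
        (Filtration.stronglyAdapted_natural hY k).mono (ℱ.mono (Nat.le_succ k))
      have : MeasurableSet[ℱ (k + 1)]
          ((fun ω' => Y (k + 1) ω' - Y k ω') ⁻¹' {(-1 : ℝ)}) :=
        (h1.sub h2).measurable (measurableSet_singleton _)
      simpa [Set.preimage, Set.mem_singleton_iff] using this
  -- Borel–Cantelli: a.e. ω has infinitely many `-1` steps
  have hBC := MeasureTheory.ae_mem_limsup_atTop_iff (ℱ := ℱ) μ hsmeas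
  have hdown' : ∀ᵐ ω ∂μ, ∀ n,
      p' < (μ[(s (n + 1)).indicator (1 : Ω → ℝ) | ℱ n]) ω := by
    rw [ae_all_iff]
    intro n
    filter_upwards [hdown n] with ω hω
    exact hω
  have hfreq : ∀ᵐ ω ∂μ, ∃ᶠ n in atTop, ω ∈ s n := by
    filter_upwards [hBC, hdown'] with ω hω hω'
    rw [← mem_limsup_iff_frequently_mem]
    refine hω.2 ?_
    have hle : ∀ n : ℕ, (n : ℝ) * p' ≤
        ∑ k ∈ Finset.range n, (μ[(s (k + 1)).indicator (1 : Ω → ℝ) | ℱ k]) ω := by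
      intro n
      calc (n : ℝ) * p' = (Finset.range n).card • p' := by
            simp [nsmul_eq_mul]
        _ ≤ _ := Finset.card_nsmul_le_sum _ _ _ (fun k _ => (hω' k).le)
    exact tendsto_atTop_mono hle
      (tendsto_natCast_atTop_atTop.atTop_mul_const hp')
  -- one-sided martingale bound applied to `-Y`
  have hsub : Submartingale (-Y) ℱ μ := hsuper.neg
  have hbdd : ∀ᵐ ω ∂μ, ∀ i, |(-Y) (i + 1) ω - (-Y) i ω| ≤ ((1 : NNReal) : ℝ) := by
    refine Eventually.of_forall fun ω i => ?_
    have := habs i ω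
    rw [abs_sub_comm] at this
    simpa [neg_add_eq_sub] using this
  have hconv := hsub.bddAbove_iff_exists_tendsto hbdd
  filter_upwards [hfreq, hconv] with ω hωf hωc
  by_contra hcon
  push_neg at hcon
  -- then `-Y · ω` is bounded above by `-b`, hence converges
  have hba : BddAbove (Set.range fun n => (-Y) n ω) := by
    refine ⟨-b, ?_⟩
    rintro y ⟨n, rfl⟩
    simpa using (hcon n).le
  obtain ⟨c, hc⟩ := hωc.1 hba
  -- so `Y · ω` converges to `-c`
  have hcY : Tendsto (fun n => Y n ω) atTop (nhds (-c)) := by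
    have := hc.neg
    simpa using this
  rw [Metric.tendsto_atTop] at hcY
  obtain ⟨N, hN⟩ := hcY (1 / 2) (by norm_num)
  obtain ⟨n, hn, hmem⟩ := (frequently_atTop.mp hωf) (N + 1)
  -- `n ≥ 1` so `n = k + 1` and `Y (k+1) ω - Y k ω = -1`
  obtain ⟨k, rfl⟩ : ∃ k, n = k + 1 := ⟨n - 1, by omega⟩
  rw [hsk] at hmem
  have hk1 : dist (Y (k + 1) ω) (-c) < 1 / 2 := hN _ (by omega)
  have hk2 : dist (Y k ω) (-c) < 1 / 2 := hN _ (by omega)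
  have : |Y (k + 1) ω - Y k ω| < 1 := by
    calc |Y (k + 1) ω - Y k ω| ≤ dist (Y (k + 1) ω) (-c) + dist (Y k ω) (-c) := by
          rw [Real.dist_eq, Real.dist_eq]
          have := abs_sub_abs_le_abs_sub (Y (k + 1) ω) (Y k ω)
          calc |Y (k + 1) ω - Y k ω|
              = |(Y (k + 1) ω - (-c)) - (Y k ω - (-c))| := by ring_nf
            _ ≤ |Y (k + 1) ω - (-c)| + |Y k ω - (-c)| := abs_sub _ _
      _ < 1 := by linarith
  rw [Set.mem_setOf_eq] at hmem
  rw [hmem] at this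
  norm_num at this
end

section
/- In the IOTA DAG model, deterministically for every n ≥ 0, the number of pending tips satisfies W(t_n) ≤ 2·h_M. -/
/- ## Deterministic core of the IOTA DAG model.

Time is discrete, `t_n = n`.  A realization of the model is described by four
sequences `θ e x y : ℕ → ℕ`: vertex `n ≥ 1` arrives at time `n`, has POW
duration `θ n`, observation delay `e n`, and parents `x n`, `y n`
(selected among the tips of the graph at time `n - e n`, truncated subtraction
encoding the convention `G(t) = G(t₀)` for `t < 0`).  The vertex `n` and the
directed edges `(n, x n)`, `(n, y n)` are added to the DAG at time `n + θ n`,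
i.e. they are present in `G(m)` exactly when `n + θ n < m`. -/

namespace IotaDAG

/-- `V θ n`: set of vertices of the DAG at time `n` (completed POW). -/
def V (θ : ℕ → ℕ) (n : ℕ) : Set ℕ := {0} ∪ {k | 1 ≤ k ∧ k + θ k < n}

/-- `E θ x y n`: set of (solid) directed edges of the DAG at time `n`. -/
def E (θ x y : ℕ → ℕ) (n : ℕ) : Set (ℕ × ℕ) :=
  {p | ∃ k, 1 ≤ k ∧ k + θ k < n ∧ (p = (k, x k) ∨ p = (k, y k))}

/-- `V' θ n`: set of arrived vertices whose POW is unfinished at time `n`. -/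
def V' (θ : ℕ → ℕ) (n : ℕ) : Set ℕ := {k | 1 ≤ k ∧ k < n ∧ n ≤ k + θ k}

/-- Tips at time `n`: vertices of in-degree 0. -/
def tips (θ x y : ℕ → ℕ) (n : ℕ) : Set ℕ :=
  {v | v ∈ V θ n ∧ ∀ i, (i, v) ∉ E θ x y n}

/-- Pending tips at time `n`: tips already selected as a parent by some arrived
vertex whose POW is unfinished. -/
def pend (θ x y : ℕ → ℕ) (n : ℕ) : Set ℕ :=
  {v | v ∈ tips θ x y n ∧ ∃ j ∈ V' θ n, x j = v ∨ y j = v}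

/-- Free tips at time `n`: tips that are not pending. -/
def free (θ x y : ℕ → ℕ) (n : ℕ) : Set ℕ := tips θ x y n \ pend θ x y n

/-- `L(t_n)`: number of tips. -/
noncomputable def L (θ x y : ℕ → ℕ) (n : ℕ) : ℕ := (tips θ x y n).ncard

/-- `W(t_n)`: number of pending tips. -/
noncomputable def W (θ x y : ℕ → ℕ) (n : ℕ) : ℕ := (pend θ x y n).ncard

/-- `F(t_n)`: number of free tips. -/
noncomputable def F (θ x y : ℕ → ℕ) (n : ℕ) : ℕ := (free θ x y n).ncard

/-- Validity of a realization: every arriving vertex selects both of its parents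
among the tips of the graph observed with its delay. -/
def Valid (θ e x y : ℕ → ℕ) : Prop :=
  ∀ n, 1 ≤ n → x n ∈ tips θ x y (n - e n) ∧ y n ∈ tips θ x y (n - e n)

/-- Directed edge relation of the limiting graph `⋃ₜ G(t)`. -/
def edgeRel (x y : ℕ → ℕ) (a b : ℕ) : Prop := 1 ≤ a ∧ (x a = b ∨ y a = b)

/-- `Reach x y w u`: `u` is reachable from `w`, i.e. there is a directed path
from `w` to `u` in the limiting graph `⋃ₜ G(t)`. -/
def Reach (x y : ℕ → ℕ) (w u : ℕ) : Prop := Relation.ReflTransGen (edgeRel x y) w u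

end IotaDAG

open IotaDAG

/-- In the IOTA DAG model, deterministically, for every `n` the
number of pending tips satisfies `W(t_n) ≤ 2 h_M`. -/
theorem pending_tips_le_two_hM
    (M : ℕ) (hM2 : 2 ≤ M)
    (h : ℕ → ℕ) (hpos : 0 < h 1) (hmono : StrictMonoOn h (Set.Icc 1 M))
    (Iε : Finset ℕ) (hIε : Iε.Nonempty) (hεmin : 0 < Iε.min' hIε)
    (θ e x y : ℕ → ℕ)
    (hθ : ∀ n, 1 ≤ n → ∃ k, 1 ≤ k ∧ k ≤ M ∧ θ n = h k)
    (he : ∀ n, 1 ≤ n → e n ∈ Iε)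
    (hvalid : Valid θ e x y) :
    ∀ n, W θ x y n ≤ 2 * h M := by
  intro n
  have hMmem : M ∈ Set.Icc 1 M := ⟨le_trans one_le_two hM2, le_refl M⟩
  have hθle : ∀ k ∈ V' θ n, θ k ≤ h M := by
    intro k hk
    obtain ⟨j, hj1, hjM, hjeq⟩ := hθ k hk.1
    rw [hjeq]
    rcases eq_or_lt_of_le hjM with h1 | h1
    · rw [h1]
    · exact le_of_lt (hmono ⟨hj1, hjM⟩ hMmem h1)
  have hsub : V' θ n ⊆ (Finset.Ico (n - h M) n : Finset ℕ) := by
    intro k hk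
    simp only [Finset.coe_Ico, Set.mem_Ico]
    refine ⟨?_, hk.2.1⟩
    have := hk.2.2
    have := hθle k hk
    omega
  have hfin : (V' θ n).Finite := Set.Finite.subset (Finset.finite_toSet _) hsub
  have hV'card : (V' θ n).ncard ≤ h M := by
    calc (V' θ n).ncard ≤ ((Finset.Ico (n - h M) n : Finset ℕ) : Set ℕ).ncard :=
          Set.ncard_le_ncard hsub (Finset.finite_toSet _)
      _ = (Finset.Ico (n - h M) n).card := by rw [Set.ncard_coe_finset]
      _ = n - (n - h M) := Nat.card_Ico _ _
      _ ≤ h M := by omega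
  have hpendsub : pend θ x y n ⊆ x '' V' θ n ∪ y '' V' θ n := by
    rintro v ⟨_, j, hj, hxy⟩
    rcases hxy with h1 | h1
    · exact Or.inl ⟨j, hj, h1⟩
    · exact Or.inr ⟨j, hj, h1⟩
  have hfinu : (x '' V' θ n ∪ y '' V' θ n).Finite :=
    Set.Finite.union (hfin.image x) (hfin.image y)
  calc W θ x y n ≤ (x '' V' θ n ∪ y '' V' θ n).ncard :=
        Set.ncard_le_ncard hpendsub hfinu
    _ ≤ (x '' V' θ n).ncard + (y '' V' θ n).ncard := Set.ncard_union_le _ _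
    _ ≤ (V' θ n).ncard + (V' θ n).ncard :=
        Nat.add_le_add (Set.ncard_image_le hfin) (Set.ncard_image_le hfin)
    _ ≤ 2 * h M := by omega
end

section
/- In the IOTA DAG model, deterministically, if at some time t_k the number of free tips satisfies F(t_k) > 2·h_M + 3·M·ε_max + 2, then |F(t_k − ε_k) ∩ F(t_k)| > 2·h_M + 2·M·ε_max + 2 > |F(t_k − ε_k) \ F(t_k)| + W(t_k − ε_k); in particular, strictly more than half of the tips in L(t_k − ε_k) belong to F(t_k). -/
open IotaDAG

section Aux

variable (θ x y : ℕ → ℕ)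

lemma IotaAux.V_subset_Iio (n : ℕ) : V θ n ⊆ Set.Iio (n + 1) := by
  intro v hv
  rcases hv with hv | hv
  · simp only [Set.mem_singleton_iff] at hv
    simp [hv]
  · obtain ⟨h1, h2⟩ := hv
    simp only [Set.mem_Iio]
    omega

lemma IotaAux.V_finite (n : ℕ) : (V θ n).Finite :=
  (Set.finite_Iio (n + 1)).subset (IotaAux.V_subset_Iio θ n)

lemma IotaAux.tips_finite (n : ℕ) : (tips θ x y n).Finite :=
  (IotaAux.V_finite θ n).subset fun _ hv => hv.1

lemma IotaAux.free_finite (n : ℕ) : (free θ x y n).Finite :=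
  (IotaAux.tips_finite θ x y n).subset Set.diff_subset

lemma IotaAux.pend_finite (n : ℕ) : (pend θ x y n).Finite :=
  (IotaAux.tips_finite θ x y n).subset fun _ hv => hv.1

lemma IotaAux.V_mono {m n : ℕ} (hmn : m ≤ n) : V θ m ⊆ V θ n := by
  intro v hv
  rcases hv with hv | hv
  · exact Or.inl hv
  · exact Or.inr ⟨hv.1, lt_of_lt_of_le hv.2 hmn⟩

lemma IotaAux.E_mono {m n : ℕ} (hmn : m ≤ n) : E θ x y m ⊆ E θ x y n := by
  rintro p ⟨j, h1, h2, h3⟩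
  exact ⟨j, h1, lt_of_lt_of_le h2 hmn, h3⟩

end Aux

/-- Deterministically, if at some time `t_k` the number of free tips
satisfies `F(t_k) > 2 h_M + 3 M ε_max + 2`, then
`|F(t_k - ε_k) ∩ F(t_k)| > 2 h_M + 2 M ε_max + 2 > |F(t_k - ε_k) \ F(t_k)| + W(t_k - ε_k)`;
in particular strictly more than half of the tips in `L(t_k - ε_k)` belong to `F(t_k)`. -/
theorem free_tips_majority
    (M : ℕ) (hM2 : 2 ≤ M)
    (h : ℕ → ℕ) (hpos : 0 < h 1) (hmono : StrictMonoOn h (Set.Icc 1 M))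
    (Iε : Finset ℕ) (hIε : Iε.Nonempty) (hεmin : 0 < Iε.min' hIε)
    (θ e x y : ℕ → ℕ)
    (hθ : ∀ n, 1 ≤ n → ∃ j, 1 ≤ j ∧ j ≤ M ∧ θ n = h j)
    (he : ∀ n, 1 ≤ n → e n ∈ Iε)
    (hvalid : Valid θ e x y)
    (k : ℕ) (hk : 1 ≤ k)
    (hF : 2 * h M + 3 * M * Iε.max' hIε + 2 < F θ x y k) :
    2 * h M + 2 * M * Iε.max' hIε + 2 < (free θ x y (k - e k) ∩ free θ x y k).ncard ∧
      (free θ x y (k - e k) \ free θ x y k).ncard + W θ x y (k - e k) <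
        2 * h M + 2 * M * Iε.max' hIε + 2 ∧
      L θ x y (k - e k) < 2 * (tips θ x y (k - e k) ∩ free θ x y k).ncard := by
  classical
  set EM := Iε.max' hIε with hEMdef
  set m := k - e k with hmdef
  have hmk : m ≤ k := Nat.sub_le _ _
  have hek : e k ≤ EM := Finset.le_max' _ _ (he k hk)
  have hkm : k - m ≤ EM := by omega
  have hM1 : 1 ≤ M := by omega
  -- bounds on θ
  have hθb : ∀ n, 1 ≤ n → 1 ≤ θ n ∧ θ n ≤ h M := by
    intro n hn
    obtain ⟨j, hj1, hjM, hjθ⟩ := hθ n hn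
    have h1j : h 1 ≤ h j := hmono.monotoneOn ⟨le_refl 1, hM1⟩ ⟨hj1, hjM⟩ hj1
    have hjM' : h j ≤ h M := hmono.monotoneOn ⟨hj1, hjM⟩ ⟨hM1, le_refl M⟩ hjM
    omega
  -- index function for θ values
  have hθ' : ∀ n, ∃ i, 1 ≤ n → 1 ≤ i ∧ i ≤ M ∧ θ n = h i := by
    intro n
    by_cases hn : 1 ≤ n
    · obtain ⟨i, hi⟩ := hθ n hn; exact ⟨i, fun _ => hi⟩
    · exact ⟨1, fun hn' => absurd hn' hn⟩
  choose idx hidx using hθ'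
  -- finiteness
  have htfin : ∀ n, (tips θ x y n).Finite := fun n => IotaAux.tips_finite θ x y n
  have hffin : ∀ n, (free θ x y n).Finite := fun n => IotaAux.free_finite θ x y n
  have hpfin : ∀ n, (pend θ x y n).Finite := fun n => IotaAux.pend_finite θ x y n
  -- the set A of vertices whose POW finishes in [m, k)
  set A : Set ℕ := {j | 1 ≤ j ∧ m ≤ j + θ j ∧ j + θ j < k} with hAdef
  have hAfin : A.Finite :=
    (Set.finite_Iio k).subset fun j hj => lt_of_le_of_lt (Nat.le_add_right _ _) hj.2.2
  have hAcard : A.ncard ≤ M * EM := by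
    have hsub : ∀ j ∈ A, (fun j => (idx j, j + θ j)) j ∈
        (↑(Finset.Icc 1 M ×ˢ Finset.Ico m k) : Set (ℕ × ℕ)) := by
      intro j hj
      obtain ⟨hj1, hj2, hj3⟩ := hj
      obtain ⟨hi1, hi2, _⟩ := hidx j hj1
      simp only [Finset.coe_product, Set.mem_prod, Finset.mem_coe, Finset.mem_Icc,
        Finset.mem_Ico]
      exact ⟨⟨hi1, hi2⟩, hj2, hj3⟩
    have hinj : Set.InjOn (fun j => (idx j, j + θ j)) A := by
      intro a ha b hb hab
      simp only [Prod.mk.injEq] at hab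
      obtain ⟨_, _, ha3⟩ := hidx a ha.1
      obtain ⟨_, _, hb3⟩ := hidx b hb.1
      have : θ a = θ b := by rw [ha3, hb3, hab.1]
      omega
    have h1 := Set.ncard_le_ncard_of_injOn _ hsub hinj (Finset.finite_toSet _)
    rw [Set.ncard_coe_finset, Finset.card_product, Nat.card_Icc, Nat.card_Ico] at h1
    calc A.ncard ≤ (M + 1 - 1) * (k - m) := h1
      _ = M * (k - m) := by rw [Nat.add_sub_cancel]
      _ ≤ M * EM := Nat.mul_le_mul_left M hkm
  -- free k ⊆ (free m ∩ free k) ∪ A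
  have hsub1 : free θ x y k ⊆ (free θ x y m ∩ free θ x y k) ∪ A := by
    intro v hv
    by_cases hvm : v ∈ free θ x y m
    · exact Or.inl ⟨hvm, hv⟩
    refine Or.inr ?_
    obtain ⟨⟨hvV, hvE⟩, hvP⟩ := hv
    by_cases hvVm : v ∈ V θ m
    · -- v is a tip at m, so pending at m, contradiction
      have hvtm : v ∈ tips θ x y m :=
        ⟨hvVm, fun i hi => hvE i (IotaAux.E_mono θ x y hmk hi)⟩
      have hvpm : v ∈ pend θ x y m := by
        by_contra hnp; exact hvm ⟨hvtm, hnp⟩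
      obtain ⟨_, j, ⟨hj1, hjm, hjθ⟩, hjxy⟩ := hvpm
      by_cases hjk : j + θ j < k
      · exfalso
        refine hvE j ⟨j, hj1, hjk, ?_⟩
        rcases hjxy with hj | hj
        · exact Or.inl (by rw [hj])
        · exact Or.inr (by rw [hj])
      · exfalso
        exact hvP ⟨⟨hvV, hvE⟩, j, ⟨hj1, lt_of_lt_of_le hjm hmk, le_of_not_gt hjk⟩, hjxy⟩
    · rcases hvV with h0 | ⟨hv1, hvk⟩
      · exact absurd (Or.inl h0) hvVm
      · refine ⟨hv1, ?_, hvk⟩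
        by_contra hlt
        push_neg at hlt
        exact hvVm (Or.inr ⟨hv1, hlt⟩)
  have hclaim1 : (free θ x y k).ncard ≤ (free θ x y m ∩ free θ x y k).ncard + A.ncard := by
    calc (free θ x y k).ncard ≤ ((free θ x y m ∩ free θ x y k) ∪ A).ncard :=
        Set.ncard_le_ncard hsub1 ((((hffin m).inter_of_left _)).union hAfin)
      _ ≤ _ := Set.ncard_union_le _ _
  -- the set J of "recent" vertices
  set J : Set ℕ := {j | 1 ≤ j ∧ j < k ∧ m ≤ j + θ j} with hJdef
  have hJfin : J.Finite := (Set.finite_Iio k).subset fun j hj => hj.2.1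
  have hJcard : J.ncard ≤ EM + h M := by
    have hsub : J ⊆ Set.Ico (m - h M) k := by
      intro j hj
      obtain ⟨hj1, hjk, hjm⟩ := hj
      have := (hθb j hj1).2
      exact ⟨by omega, hjk⟩
    calc J.ncard ≤ (Set.Ico (m - h M) k).ncard :=
        Set.ncard_le_ncard hsub (Set.finite_Ico _ _)
      _ = k - (m - h M) := by
          rw [← Finset.coe_Ico, Set.ncard_coe_finset, Nat.card_Ico]
      _ ≤ EM + h M := by omega
  -- the bad set S
  set S : Set ℕ := (free θ x y m \ free θ x y k) ∪ pend θ x y m with hSdef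
  have hSsub : S ⊆ (x '' J) ∪ (y '' J) := by
    intro v hv
    have hhit : ∃ j ∈ J, x j = v ∨ y j = v := by
      rcases hv with ⟨hvf, hvnf⟩ | hvp
      · obtain ⟨⟨hvV, hvE⟩, hvnp⟩ := hvf
        by_cases hvtk : v ∈ tips θ x y k
        · have hvpk : v ∈ pend θ x y k := by
            by_contra hc; exact hvnf ⟨hvtk, hc⟩
          obtain ⟨_, j, ⟨hj1, hjk, hjθ⟩, hjxy⟩ := hvpk
          exact ⟨j, ⟨hj1, hjk, le_trans hmk hjθ⟩, hjxy⟩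
        · have hvVk : v ∈ V θ k := IotaAux.V_mono θ hmk hvV
          have hedge : ∃ i, (i, v) ∈ E θ x y k := by
            by_contra hc; push_neg at hc; exact hvtk ⟨hvVk, hc⟩
          obtain ⟨i, j, hj1, hjk, hjeq⟩ := hedge
          have hxy : x j = v ∨ y j = v := by
            rcases hjeq with hj | hj
            · exact Or.inl (congrArg Prod.snd hj).symm
            · exact Or.inr (congrArg Prod.snd hj).symm
          have hij : i = j := by
            rcases hjeq with hj | hj
            · exact congrArg Prod.fst hj
            · exact congrArg Prod.fst hj
          have hup : ¬ (j + θ j < m) := by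
            intro hlt
            exact hvE j ⟨j, hj1, hlt, by
              rcases hxy with hh | hh
              · exact Or.inl (by rw [hh])
              · exact Or.inr (by rw [hh])⟩
          exact ⟨j, ⟨hj1, by omega, le_of_not_gt hup⟩, hxy⟩
      · obtain ⟨_, j, ⟨hj1, hjm, hjθ⟩, hjxy⟩ := hvp
        exact ⟨j, ⟨hj1, lt_of_lt_of_le hjm hmk, hjθ⟩, hjxy⟩
    obtain ⟨j, hj, hxy⟩ := hhit
    rcases hxy with hh | hh
    · exact Or.inl ⟨j, hj, hh⟩
    · exact Or.inr ⟨j, hj, hh⟩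
  have hScard : S.ncard ≤ 2 * J.ncard := by
    calc S.ncard ≤ ((x '' J) ∪ (y '' J)).ncard :=
        Set.ncard_le_ncard hSsub ((hJfin.image x).union (hJfin.image y))
      _ ≤ (x '' J).ncard + (y '' J).ncard := Set.ncard_union_le _ _
      _ ≤ J.ncard + J.ncard :=
        add_le_add (Set.ncard_image_le hJfin) (Set.ncard_image_le hJfin)
      _ = 2 * J.ncard := (two_mul _).symm
  have hdisj : Disjoint (free θ x y m \ free θ x y k) (pend θ x y m) :=
    Disjoint.mono_left Set.diff_subset Set.disjoint_sdiff_left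
  have hSeq : (free θ x y m \ free θ x y k).ncard + W θ x y m = S.ncard :=
    (Set.ncard_union_eq hdisj ((hffin m).subset Set.diff_subset) (hpfin m)).symm
  -- split tips m by free k
  have hsub3 : tips θ x y m \ free θ x y k ⊆ S := by
    rintro v ⟨hvt, hvnf⟩
    by_cases hvp : v ∈ pend θ x y m
    · exact Or.inr hvp
    · exact Or.inl ⟨⟨hvt, hvp⟩, hvnf⟩
  have hsplit : (tips θ x y m ∩ free θ x y k).ncard +
      (tips θ x y m \ free θ x y k).ncard = L θ x y m :=
    Set.ncard_inter_add_ncard_diff_eq_ncard _ _ (htfin m)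
  have hsub4 : (free θ x y m ∩ free θ x y k).ncard ≤
      (tips θ x y m ∩ free θ x y k).ncard :=
    Set.ncard_le_ncard (Set.inter_subset_inter_left _ Set.diff_subset)
      ((htfin m).inter_of_left _)
  have hdiffS : (tips θ x y m \ free θ x y k).ncard ≤ S.ncard :=
    Set.ncard_le_ncard hsub3 (((hffin m).subset Set.diff_subset).union (hpfin m))
  -- arithmetic glue
  have e3 : 3 * M * EM = 3 * (M * EM) := by ring
  have e2 : 2 * M * EM = 2 * (M * EM) := by ring
  have hFk : 2 * h M + 3 * (M * EM) + 2 < (free θ x y k).ncard := by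
    rw [← e3]; exact hF
  have hme : EM ≤ M * EM := Nat.le_mul_of_pos_left _ (by omega)
  rw [e2]
  refine ⟨by omega, by omega, by omega⟩
end

section
/- In the IOTA DAG model, fix a constant b > 10·h_M − 6·h_1 + 3·M·ε_max + 2 and a constant κ_A > 1 + max{2·h_M, 3·h_M·(h_M + ε_min)/(h_M − 1)}, and assume h_M > 1. For any i and any event D_{i−1} ∈ Σ_{i−1} with D_{i−1} ⊆ {L(t_i) ≤ b} and P(D_{i−1}) > 0, the conditional probability P(A_i | D_{i−1}) is strictly positive, where A_i is the Step-A event. -/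
namespace IotaDAG

/- ## The bottleneck construction (Steps A, B, C). -/

/-- Step-A (tidying) event for a realization: every vertex `j` arriving at a time in
`[i, i + κA)` has delay `εmin`, POW duration `hM`, selects a single parent
(`x j = y j`) which lies outside the current free tips whenever possible. -/
def StepA (θ e x y : ℕ → ℕ) (hM εmin κA i : ℕ) : Prop :=
  ∀ j, 1 ≤ j → i ≤ j → j < i + κA →
    e j = εmin ∧ θ j = hM ∧ x j = y j ∧
    (¬ tips θ x y (j - εmin) ⊆ free θ x y j →
        x j ∈ tips θ x y (j - εmin) \ free θ x y j) ∧
    (tips θ x y (j - εmin) ⊆ free θ x y j → x j ∈ tips θ x y (j - εmin))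

/-- `FB`: the set consisting of the `2 (hM + εmin)` smallest elements of the set of
free tips at time `i + κA`. -/
def FB (θ x y : ℕ → ℕ) (hM εmin κA i : ℕ) : Set ℕ :=
  {v | v ∈ free θ x y (i + κA) ∧
        (free θ x y (i + κA) ∩ Set.Iic v).ncard ≤ 2 * (hM + εmin)}

/-- Step-B (preparation) event: every vertex `j` arriving at a time in
`[i + κA, i + κB)` has POW duration `hM`, delay `εmin`, and selects a single parent
among the tips it observes, avoiding the reserved set `FB`. -/
def StepB (θ e x y : ℕ → ℕ) (hM εmin κA κB i : ℕ) : Prop :=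
  ∀ j, 1 ≤ j → i + κA ≤ j → j < i + κB →
    θ j = hM ∧ e j = εmin ∧ x j = y j ∧
    x j ∈ tips θ x y (j - εmin) \ FB θ x y hM εmin κA i

/-- `c_i := F(t_i + κB) + |V'(t_i + κB)|`. -/
noncomputable def ci (θ x y : ℕ → ℕ) (κB i : ℕ) : ℕ :=
  F θ x y (i + κB) + (V' θ (i + κB)).ncard

/-- The labelling `ξ (i, j, k)` of the interchange structure: for `j = 1` it is the
`k`-th smallest element of `F(t_i + κB) ∪ V'(t_i + κB)` (1-indexed), and for `j ≥ 2`
it is the vertex arriving at time `i + κB - 1 + (j - 2) * c_i + k`. -/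
noncomputable def ξ (θ x y : ℕ → ℕ) (κB i j k : ℕ) : ℕ :=
  if j ≤ 1 then Nat.nth (fun v => v ∈ free θ x y (i + κB) ∪ V' θ (i + κB)) (k - 1)
  else i + κB - 1 + (j - 2) * ci θ x y κB i + k

/-- Step-C (interchange) event: every vertex `v` arriving at a time in
`[i + κB, i + κC]`, with additional label `(i, j, k)` where
`j = 2 + (v - (i + κB)) / c_i` and `k = (v - (i + κB)) % c_i + 1`, has POW duration
`hM`, delay `εmin`, and parents `x v = ξ (i, j-1, max 1 (k-1))`,
`y v = ξ (i, j-1, min (k+1) c_i)`. -/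
noncomputable def StepC (θ e x y : ℕ → ℕ) (hM εmin κB κC i : ℕ) : Prop :=
  ∀ v, 1 ≤ v → i + κB ≤ v → v ≤ i + κC →
    θ v = hM ∧ e v = εmin ∧
    x v = ξ θ x y κB i (1 + (v - (i + κB)) / ci θ x y κB i)
            (max 1 ((v - (i + κB)) % ci θ x y κB i)) ∧
    y v = ξ θ x y κB i (1 + (v - (i + κB)) / ci θ x y κB i)
            (min ((v - (i + κB)) % ci θ x y κB i + 2) (ci θ x y κB i))

end IotaDAG
namespace IotaDAG

/-- `Σ_i`: the σ-algebra generated by the random variables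
`Θ_k, ε_k, X_k, Y_k` for `k = 1, …, i`. -/
def sigAlg {Ω : Type*} (Θ ε X Y : ℕ → Ω → ℕ) (i : ℕ) : MeasurableSpace Ω :=
  ⨆ k ∈ Finset.Icc 1 i,
    (MeasurableSpace.comap (Θ k) ⊤ ⊔ MeasurableSpace.comap (ε k) ⊤ ⊔
      MeasurableSpace.comap (X k) ⊤ ⊔ MeasurableSpace.comap (Y k) ⊤)

end IotaDAG

open MeasureTheory ProbabilityTheory IotaDAG
open scoped Classical

/-!
The positivity is built up one arrival at a time. Conditioning on the history up to time
`n - 1`, which takes countably many values, fixes the DAG at time `n`, hence both the tips `T`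
observed with delay `ε_min` and the free tips. The uniform parent law then gives the single
parent `v ∈ T` prescribed by Step A (outside the free tips when possible) conditional probability
`p_{Θ,M} p_{ε,ε_min} / |T|² > 0`; here `T ≠ ∅` because the newest vertex of a valid DAG is
always a tip. Iterating over the `κ_A` arrivals in `[t_i, t_i + κ_A)` produces a subevent of `D`
of positive measure on which `A_i` holds.
-/

theorem Set.Nonempty.exists_mem_not_subset_imp_notMem {α : Type*} {s t : Set α}
    (hs : s.Nonempty) : ∃ v ∈ s, ¬s ⊆ t → v ∉ t := by
  by_cases hst : s ⊆ t
  · obtain ⟨v, hv⟩ := hs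
    exact ⟨v, hv, absurd hst⟩
  · obtain ⟨v, hv, hvt⟩ := Set.not_subset.1 hst
    exact ⟨v, hv, fun _ => hvt⟩

theorem MeasureTheory.measure_inter_forall_pos_of_step {Ω : Type*} {mΩ : MeasurableSpace Ω}
    (μ : Measure Ω) (𝓕 : ℕ → MeasurableSpace Ω) (P : ℕ → Ω → Prop)
    (hstep : ∀ n A, MeasurableSet[𝓕 (n - 1)] A → 0 < μ A →
      ∃ B ⊆ A, MeasurableSet[𝓕 n] B ∧ 0 < μ B ∧ ∀ ω ∈ B, P n ω)
    {i : ℕ} {D : Set Ω} (hD : MeasurableSet[𝓕 (i - 1)] D) (hDpos : 0 < μ D) (κ : ℕ) :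
    0 < μ (D ∩ {ω | ∀ j, i ≤ j → j < i + κ → P j ω}) := by
  suffices ∀ κ, ∃ B ⊆ D, MeasurableSet[𝓕 (i + κ - 1)] B ∧ 0 < μ B ∧
      ∀ ω ∈ B, ∀ j, i ≤ j → j < i + κ → P j ω by
    obtain ⟨B, hBD, -, hBpos, hBP⟩ := this κ
    exact hBpos.trans_le (measure_mono fun ω hω => ⟨hBD hω, hBP ω hω⟩)
  intro κ
  induction κ with
  | zero => exact ⟨D, subset_rfl, hD, hDpos, fun _ _ j hij hji => absurd hji (by omega)⟩
  | succ κ ih =>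
    obtain ⟨B, hBD, hB, hBpos, hBP⟩ := ih
    obtain ⟨B', hB'B, hB', hB'pos, hB'P⟩ := hstep (i + κ) B hB hBpos
    refine ⟨B', hB'B.trans hBD, hB', hB'pos, fun ω hω j hij hji => ?_⟩
    rcases (by omega : j < i + κ ∨ j = i + κ) with hj | rfl
    · exact hBP ω (hB'B hω) j hij hj
    · exact hB'P ω hω

namespace IotaDAG

section Deterministic

variable {θ e x y θ' x' y' : ℕ → ℕ} {t : ℕ}

lemma V_congr (hθ : ∀ k, 1 ≤ k → k < t → θ k = θ' k) : V θ t = V θ' t := by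
  ext v
  simp only [V, Set.mem_union, Set.mem_ofPred_eq]
  refine or_congr_right ⟨fun ⟨hv, hlt⟩ => ⟨hv, ?_⟩, fun ⟨hv, hlt⟩ => ⟨hv, ?_⟩⟩
  · rwa [← hθ v hv (by omega)]
  · rwa [hθ v hv (by omega)]

lemma E_congr (h : ∀ k, 1 ≤ k → k < t → θ k = θ' k ∧ x k = x' k ∧ y k = y' k) :
    E θ x y t = E θ' x' y' t := by
  ext p
  simp only [E, Set.mem_ofPred_eq]
  refine exists_congr fun k => ⟨fun ⟨hk, hlt, hp⟩ => ?_, fun ⟨hk, hlt, hp⟩ => ?_⟩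
  · obtain ⟨hθk, hxk, hyk⟩ := h k hk (by omega)
    exact ⟨hk, hθk ▸ hlt, hxk ▸ hyk ▸ hp⟩
  · obtain ⟨hθk, hxk, hyk⟩ := h k hk (by omega)
    exact ⟨hk, hθk ▸ hlt, hxk ▸ hyk ▸ hp⟩

lemma tips_congr (h : ∀ k, 1 ≤ k → k < t → θ k = θ' k ∧ x k = x' k ∧ y k = y' k) :
    tips θ x y t = tips θ' x' y' t := by
  simp only [tips, V_congr fun k hk hkt => (h k hk hkt).1, E_congr h]

lemma free_congr (h : ∀ k, 1 ≤ k → k < t → θ k = θ' k ∧ x k = x' k ∧ y k = y' k) :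
    free θ x y t = free θ' x' y' t := by
  have hV' : V' θ t = V' θ' t := by
    ext k
    simp only [V', Set.mem_ofPred_eq]
    exact ⟨fun ⟨hk, hkt, hle⟩ => ⟨hk, hkt, (h k hk hkt).1 ▸ hle⟩,
      fun ⟨hk, hkt, hle⟩ => ⟨hk, hkt, (h k hk hkt).1 ▸ hle⟩⟩
  simp only [free, pend, tips_congr h, hV']
  refine congrArg _ (Set.ext fun v => and_congr_right fun _ => ?_)
  refine exists_congr fun j => and_congr_right fun hj => ?_
  obtain ⟨-, hxj, hyj⟩ := h j hj.1 hj.2.1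
  rw [hxj, hyj]

lemma eq_zero_or_lt_of_mem_V {v : ℕ} (hv : v ∈ V θ t) : v = 0 ∨ v < t := by
  rcases hv with hv | ⟨-, hv⟩
  · exact Or.inl hv
  · exact Or.inr (by omega)

lemma V_finite : (V θ t).Finite :=
  (Set.finite_Iic t).subset fun v hv => by
    rcases eq_zero_or_lt_of_mem_V hv with rfl | hv
    · exact Nat.zero_le t
    · exact hv.le

lemma tips_finite (θ x y : ℕ → ℕ) (t : ℕ) : (tips θ x y t).Finite :=
  V_finite.subset fun _ hv => hv.1

lemma Valid.parent_lt (hV : Valid θ e x y) {k : ℕ} (hk : 1 ≤ k) : x k < k ∧ y k < k := by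
  have lt_of_mem {v : ℕ} (hv : v ∈ tips θ x y (k - e k)) : v < k := by
    rcases eq_zero_or_lt_of_mem_V hv.1 with h0 | hlt <;> omega
  exact ⟨lt_of_mem (hV k hk).1, lt_of_mem (hV k hk).2⟩

lemma Valid.tips_nonempty (hV : Valid θ e x y) (t : ℕ) : (tips θ x y t).Nonempty := by
  obtain ⟨v, hvV, hmax⟩ := Set.exists_max_image (V θ t) id V_finite ⟨0, Or.inl rfl⟩
  refine ⟨v, hvV, fun _ ⟨k, hk, hkt, hp⟩ => ?_⟩
  have hkv : k ≤ v := hmax k (Or.inr ⟨hk, hkt⟩)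
  have := hV.parent_lt hk
  rcases hp with hp | hp <;> cases hp <;> omega

end Deterministic

section Measurability

variable {Ω : Type*} (Θ ε X Y : ℕ → Ω → ℕ) {m k : ℕ}

lemma comap_le_sigAlg (hk : 1 ≤ k) (hkm : k ≤ m) :
    MeasurableSpace.comap (Θ k) ⊤ ⊔ MeasurableSpace.comap (ε k) ⊤ ⊔
      MeasurableSpace.comap (X k) ⊤ ⊔ MeasurableSpace.comap (Y k) ⊤ ≤ sigAlg Θ ε X Y m :=
  le_iSup₂ (f := fun j (_ : j ∈ Finset.Icc 1 m) =>
    MeasurableSpace.comap (Θ j) ⊤ ⊔ MeasurableSpace.comap (ε j) ⊤ ⊔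
      MeasurableSpace.comap (X j) ⊤ ⊔ MeasurableSpace.comap (Y j) ⊤) k
    (Finset.mem_Icc.2 ⟨hk, hkm⟩)

lemma measurable_sigAlg (hk : 1 ≤ k) (hkm : k ≤ m) :
    Measurable[sigAlg Θ ε X Y m] (Θ k) ∧ Measurable[sigAlg Θ ε X Y m] (ε k) ∧
      Measurable[sigAlg Θ ε X Y m] (X k) ∧ Measurable[sigAlg Θ ε X Y m] (Y k) := by
  have h := comap_le_sigAlg Θ ε X Y hk hkm
  exact ⟨.of_comap_le (le_sup_left.trans (le_sup_left.trans (le_sup_left.trans h))),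
    .of_comap_le (le_sup_right.trans (le_sup_left.trans (le_sup_left.trans h))),
    .of_comap_le (le_sup_right.trans (le_sup_left.trans h)), .of_comap_le (le_sup_right.trans h)⟩

lemma measurableSet_arrival_eq (hk : 1 ≤ k) {a d v w : ℕ} :
    MeasurableSet[sigAlg Θ ε X Y k]
      {ω | Θ k ω = a ∧ ε k ω = d ∧ X k ω = v ∧ Y k ω = w} :=
  have h := measurable_sigAlg Θ ε X Y hk le_rfl
  (h.1 (measurableSet_singleton a)).inter ((h.2.1 (measurableSet_singleton d)).inter
    ((h.2.2.1 (measurableSet_singleton v)).inter (h.2.2.2 (measurableSet_singleton w))))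

lemma sigAlg_mono {m m' : ℕ} (h : m ≤ m') :
    sigAlg Θ ε X Y m ≤ sigAlg Θ ε X Y m' :=
  biSup_mono fun k hk => by simp only [Finset.mem_Icc] at hk ⊢; omega

lemma sigAlg_le [mΩ : MeasurableSpace Ω] (hΘ : ∀ n, Measurable (Θ n))
    (hε : ∀ n, Measurable (ε n)) (hX : ∀ n, Measurable (X n)) (hY : ∀ n, Measurable (Y n)) :
    sigAlg Θ ε X Y m ≤ mΩ :=
  iSup₂_le fun k _ => sup_le (sup_le (sup_le (hΘ k).comap_le (hε k).comap_le)
    (hX k).comap_le) (hY k).comap_le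

/-- The first `m` POW durations and parent choices, which determine the DAG up to time
`m + 1`. -/
def history (m : ℕ) (ω : Ω) : Set.Icc 1 m → ℕ × ℕ × ℕ :=
  fun k => (Θ k ω, X k ω, Y k ω)

lemma measurable_history : Measurable[sigAlg Θ ε X Y m] (history Θ X Y m) :=
  @measurable_pi_lambda _ _ _ (sigAlg Θ ε X Y m) _ _ fun k =>
    have h := measurable_sigAlg Θ ε X Y k.2.1 k.2.2
    h.1.prodMk (h.2.2.1.prodMk h.2.2.2)

variable {Θ X Y}

lemma eq_of_history_eq {ω ω' : Ω} (h : history Θ X Y m ω = history Θ X Y m ω')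
    (hk : 1 ≤ k) (hkm : k ≤ m) :
    Θ k ω = Θ k ω' ∧ X k ω = X k ω' ∧ Y k ω = Y k ω' := by
  simpa [history] using congrFun h ⟨k, hk, hkm⟩

lemma tips_eq_of_history_eq {ω ω' : Ω} {t : ℕ} (ht : t ≤ m + 1)
    (h : history Θ X Y m ω = history Θ X Y m ω') :
    tips (fun j => Θ j ω) (fun j => X j ω) (fun j => Y j ω) t =
      tips (fun j => Θ j ω') (fun j => X j ω') (fun j => Y j ω') t :=
  tips_congr fun _ hk hkt => eq_of_history_eq h hk (by omega)

lemma free_eq_of_history_eq {ω ω' : Ω} {t : ℕ} (ht : t ≤ m + 1)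
    (h : history Θ X Y m ω = history Θ X Y m ω') :
    free (fun j => Θ j ω) (fun j => X j ω) (fun j => Y j ω) t =
      free (fun j => Θ j ω') (fun j => X j ω') (fun j => Y j ω') t :=
  free_congr fun _ hk hkt => eq_of_history_eq h hk (by omega)

end Measurability

def StepAAt (θ e x y : ℕ → ℕ) (hM εmin j : ℕ) : Prop :=
  e j = εmin ∧ θ j = hM ∧ x j = y j ∧
    (¬ tips θ x y (j - εmin) ⊆ free θ x y j →
        x j ∈ tips θ x y (j - εmin) \ free θ x y j) ∧
    (tips θ x y (j - εmin) ⊆ free θ x y j → x j ∈ tips θ x y (j - εmin))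

lemma stepA_iff {θ e x y : ℕ → ℕ} {hM εmin κA i : ℕ} :
    StepA θ e x y hM εmin κA i ↔
      ∀ j, i ≤ j → j < i + κA → 1 ≤ j → StepAAt θ e x y hM εmin j :=
  ⟨fun h j hij hji hj => h j hj hij hji, fun h j hj hij hji => h j hij hji hj⟩

section Probability

variable {Ω : Type*} {mΩ : MeasurableSpace Ω}

/-- The parent law of the model at time `n` restricted to `Θ_n = a`, `ε_n = d` and
`X_n = Y_n`, with `q = p_{Θ,k} p_{ε,d}`. -/
def SingleParentLaw (μ : Measure Ω) (Θ ε X Y : ℕ → Ω → ℕ) (n a d : ℕ) (q : ℝ) :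
    Prop :=
  ∀ A : Set Ω, MeasurableSet[sigAlg Θ ε X Y (n - 1)] A →
    ∀ v, (μ (A ∩ {ω | Θ n ω = a ∧ ε n ω = d ∧ X n ω = v ∧ Y n ω = v})).toReal
      = ∫ ω in A,
          (if v ∈ tips (fun m => Θ m ω) (fun m => X m ω) (fun m => Y m ω) (n - d) ∧
              v ∈ tips (fun m => Θ m ω) (fun m => X m ω) (fun m => Y m ω) (n - d)
            then q / (L (fun m => Θ m ω) (fun m => X m ω) (fun m => Y m ω) (n - d) : ℝ) ^ 2
            else 0) ∂μ

variable (μ : Measure Ω) [IsFiniteMeasure μ] {Θ ε X Y : ℕ → Ω → ℕ} {n a d : ℕ}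
  {q : ℝ}

lemma measure_inter_parent_eq_pos (hle : sigAlg Θ ε X Y (n - 1) ≤ mΩ) (hq : 0 < q)
    (hlaw : SingleParentLaw μ Θ ε X Y n a d q)
    {A : Set Ω} (hA : MeasurableSet[sigAlg Θ ε X Y (n - 1)] A) (hApos : 0 < μ A)
    {T : Set ℕ}
    (hT : ∀ ω ∈ A, tips (fun m => Θ m ω) (fun m => X m ω) (fun m => Y m ω) (n - d) = T)
    {v : ℕ} (hv : v ∈ T) :
    0 < μ (A ∩ {ω | Θ n ω = a ∧ ε n ω = d ∧ X n ω = v ∧ Y n ω = v}) := by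
  obtain ⟨ω₀, hω₀⟩ := nonempty_of_measure_ne_zero hApos.ne'
  have hTcard : 0 < T.ncard :=
    (Set.ncard_pos (hT ω₀ hω₀ ▸ tips_finite _ _ _ _)).2 ⟨v, hv⟩
  refine (ENNReal.toReal_pos_iff.1 ?_).1
  rw [hlaw A hA v, setIntegral_congr_fun (g := fun _ => q / (T.ncard : ℝ) ^ 2) (hle _ hA)
      fun ω hω => by simp only [L, hT ω hω, hv, and_self, if_true],
    setIntegral_const, smul_eq_mul, measureReal_def]
  exact mul_pos (ENNReal.toReal_pos hApos.ne' (measure_ne_top μ A)) (by positivity)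

lemma exists_subset_stepAAt (hle : sigAlg Θ ε X Y (n - 1) ≤ mΩ)
    (hvalid : ∀ᵐ ω ∂μ,
      Valid (fun m => Θ m ω) (fun m => ε m ω) (fun m => X m ω) (fun m => Y m ω))
    (hq : 0 < q)
    (hlaw : 1 ≤ n → SingleParentLaw μ Θ ε X Y n a d q)
    {A : Set Ω} (hA : MeasurableSet[sigAlg Θ ε X Y (n - 1)] A) (hApos : 0 < μ A) :
    ∃ B ⊆ A, MeasurableSet[sigAlg Θ ε X Y n] B ∧ 0 < μ B ∧ ∀ ω ∈ B, 1 ≤ n →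
      StepAAt (fun m => Θ m ω) (fun m => ε m ω) (fun m => X m ω) (fun m => Y m ω) a d n := by
  rcases Nat.eq_zero_or_pos n with rfl | hn
  · exact ⟨A, subset_rfl, hA, hApos, fun _ _ h => absurd h (by omega)⟩
  obtain ⟨c, hcpos⟩ : ∃ c, 0 < μ (A ∩ history Θ X Y (n - 1) ⁻¹' {c}) := by
    refine exists_measure_pos_of_not_measure_iUnion_null ?_
    rwa [← Set.inter_iUnion, ← Set.preimage_iUnion, Set.iUnion_of_singleton,
      Set.preimage_univ, Set.inter_univ, ← pos_iff_ne_zero]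
  set A' := A ∩ history Θ X Y (n - 1) ⁻¹' {c}
  have hA' : MeasurableSet[sigAlg Θ ε X Y (n - 1)] A' :=
    hA.inter (measurable_history Θ ε X Y (measurableSet_singleton c))
  obtain ⟨ω₀, hω₀, hω₀valid⟩ :=
    Measure.exists_mem_of_measure_ne_zero_of_ae hcpos.ne' (ae_restrict_of_ae hvalid)
  have hhist : ∀ ω ∈ A', history Θ X Y (n - 1) ω = history Θ X Y (n - 1) ω₀ :=
    fun ω hω => hω.2.trans hω₀.2.symm
  set T := tips (fun m => Θ m ω₀) (fun m => X m ω₀) (fun m => Y m ω₀) (n - d)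
  set Fr := free (fun m => Θ m ω₀) (fun m => X m ω₀) (fun m => Y m ω₀) n
  obtain ⟨v, hvT, hvFr⟩ :=
    (hω₀valid.tips_nonempty (n - d)).exists_mem_not_subset_imp_notMem (t := Fr)
  have hT :
      ∀ ω ∈ A', tips (fun m => Θ m ω) (fun m => X m ω) (fun m => Y m ω) (n - d) = T :=
    fun ω hω => tips_eq_of_history_eq (by omega) (hhist ω hω)
  have hFr : ∀ ω ∈ A', free (fun m => Θ m ω) (fun m => X m ω) (fun m => Y m ω) n = Fr :=
    fun ω hω => free_eq_of_history_eq (by omega) (hhist ω hω)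
  refine ⟨A' ∩ {ω | Θ n ω = a ∧ ε n ω = d ∧ X n ω = v ∧ Y n ω = v},
    Set.inter_subset_left.trans Set.inter_subset_left,
    (sigAlg_mono Θ ε X Y (Nat.sub_le n 1) _ hA').inter (measurableSet_arrival_eq Θ ε X Y hn),
    measure_inter_parent_eq_pos μ hle hq (hlaw hn) hA' hcpos hT hvT,
    fun ω ⟨hωA', hΘn, hεn, hXn, hYn⟩ _ => ?_⟩
  simp only [StepAAt, hT ω hωA', hFr ω hωA']
  exact ⟨hεn, hΘn, hXn.trans hYn.symm, fun h => hXn ▸ ⟨hvT, hvFr h⟩,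
    fun _ => hXn ▸ hvT⟩

end Probability

end IotaDAG

theorem stepA_positive_probability_general
    {Ω : Type*} {mΩ : MeasurableSpace Ω}
    (μ : MeasureTheory.Measure Ω) [MeasureTheory.IsProbabilityMeasure μ]
    (M : ℕ) (hM2 : 2 ≤ M)
    (h : ℕ → ℕ)
    (Iε : Finset ℕ) (hIε : Iε.Nonempty)
    (pΘ pε : ℕ → ℝ)
    (hpΘ : ∀ k ∈ Finset.Icc 1 M, 0 < pΘ k)
    (hpε : ∀ j ∈ Iε, 0 < pε j)
    (Θ ε X Y : ℕ → Ω → ℕ)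
    (hΘm : ∀ n, Measurable (Θ n)) (hεm : ∀ n, Measurable (ε n))
    (hXm : ∀ n, Measurable (X n)) (hYm : ∀ n, Measurable (Y n))
    -- almost surely the realization is a valid trajectory of the model
    (hmodel : ∀ᵐ ω ∂μ,
      (∀ n, 1 ≤ n → (∃ k, 1 ≤ k ∧ k ≤ M ∧ Θ n ω = h k) ∧ ε n ω ∈ Iε) ∧
      Valid (fun m => Θ m ω) (fun m => ε m ω) (fun m => X m ω) (fun m => Y m ω))
    -- the conditional law of `(Θ_n, ε_n, X_n, Y_n)` given `Σ_{n-1}`: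
    -- parents are uniform with replacement on the delayed set of tips
    (hlaw : ∀ n, 1 ≤ n → ∀ k ∈ Finset.Icc 1 M, ∀ j ∈ Iε, ∀ v v' : ℕ,
      ∀ D : Set Ω, MeasurableSet[sigAlg Θ ε X Y (n - 1)] D →
        (μ (D ∩ {ω | Θ n ω = h k ∧ ε n ω = j ∧ X n ω = v ∧ Y n ω = v'})).toReal
          = ∫ ω in D,
              (if v ∈ tips (fun m => Θ m ω) (fun m => X m ω) (fun m => Y m ω) (n - j) ∧
                  v' ∈ tips (fun m => Θ m ω) (fun m => X m ω) (fun m => Y m ω) (n - j)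
                then pΘ k * pε j /
                  (L (fun m => Θ m ω) (fun m => X m ω) (fun m => Y m ω) (n - j) : ℝ) ^ 2
                else 0) ∂μ)
    (κA : ℕ)
    (i : ℕ) (D : Set Ω)
    (hD : MeasurableSet[sigAlg Θ ε X Y (i - 1)] D)
    (hDpos : 0 < μ D) :
    0 < μ[|D] {ω | StepA (fun m => Θ m ω) (fun m => ε m ω) (fun m => X m ω)
      (fun m => Y m ω) (h M) (Iε.min' hIε) κA i} := by
  have hM : M ∈ Finset.Icc 1 M := Finset.mem_Icc.2 ⟨by omega, le_rfl⟩
  have hεmin : Iε.min' hIε ∈ Iε := Iε.min'_mem hIε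
  have hle : ∀ m, sigAlg Θ ε X Y m ≤ mΩ := fun _ => sigAlg_le Θ ε X Y hΘm hεm hXm hYm
  have hstep : ∀ n A, MeasurableSet[sigAlg Θ ε X Y (n - 1)] A → 0 < μ A →
      ∃ B ⊆ A, MeasurableSet[sigAlg Θ ε X Y n] B ∧ 0 < μ B ∧ ∀ ω ∈ B, 1 ≤ n →
        StepAAt (fun m => Θ m ω) (fun m => ε m ω) (fun m => X m ω) (fun m => Y m ω)
          (h M) (Iε.min' hIε) n :=
    fun n _ hA hApos => exists_subset_stepAAt μ (hle _) (hmodel.mono fun _ hω => hω.2)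
      (mul_pos (hpΘ M hM) (hpε _ hεmin)) (fun hn A hA v => hlaw n hn M hM _ hεmin v v A hA)
      hA hApos
  refine cond_pos_of_inter_ne_zero (hle _ _ hD) ?_
  simpa only [stepA_iff] using (measure_inter_forall_pos_of_step μ _ _ hstep hD hDpos κA).ne'

/-- With `b > 10 h_M - 6 h_1 + 3 M ε_max + 2`,
`κ_A > 1 + max {2 h_M, 3 h_M (h_M + ε_min) / (h_M - 1)}` and `h_M > 1`: for any `i` and
any event `D ∈ Σ_{i-1}` with `D ⊆ {L(t_i) ≤ b}` and `P(D) > 0`, the Step-A event `A_i`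
has strictly positive conditional probability given `D`. -/
theorem stepA_positive_probability
    {Ω : Type*} {mΩ : MeasurableSpace Ω}
    (μ : MeasureTheory.Measure Ω) [MeasureTheory.IsProbabilityMeasure μ]
    (M : ℕ) (hM2 : 2 ≤ M)
    (h : ℕ → ℕ) (hpos : 0 < h 1) (hmono : StrictMonoOn h (Set.Icc 1 M))
    (Iε : Finset ℕ) (hIε : Iε.Nonempty) (hεmin : 0 < Iε.min' hIε)
    (pΘ pε : ℕ → ℝ)
    (hpΘ : ∀ k ∈ Finset.Icc 1 M, 0 < pΘ k) (hpΘsum : ∑ k ∈ Finset.Icc 1 M, pΘ k = 1)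
    (hpε : ∀ j ∈ Iε, 0 < pε j) (hpεsum : ∑ j ∈ Iε, pε j = 1)
    (Θ ε X Y : ℕ → Ω → ℕ)
    (hΘm : ∀ n, Measurable (Θ n)) (hεm : ∀ n, Measurable (ε n))
    (hXm : ∀ n, Measurable (X n)) (hYm : ∀ n, Measurable (Y n))
    -- almost surely the realization is a valid trajectory of the model
    (hmodel : ∀ᵐ ω ∂μ,
      (∀ n, 1 ≤ n → (∃ k, 1 ≤ k ∧ k ≤ M ∧ Θ n ω = h k) ∧ ε n ω ∈ Iε) ∧
      Valid (fun m => Θ m ω) (fun m => ε m ω) (fun m => X m ω) (fun m => Y m ω))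
    -- the conditional law of `(Θ_n, ε_n, X_n, Y_n)` given `Σ_{n-1}`:
    -- parents are uniform with replacement on the delayed set of tips
    (hlaw : ∀ n, 1 ≤ n → ∀ k ∈ Finset.Icc 1 M, ∀ j ∈ Iε, ∀ v v' : ℕ,
      ∀ D : Set Ω, MeasurableSet[sigAlg Θ ε X Y (n - 1)] D →
        (μ (D ∩ {ω | Θ n ω = h k ∧ ε n ω = j ∧ X n ω = v ∧ Y n ω = v'})).toReal
          = ∫ ω in D,
              (if v ∈ tips (fun m => Θ m ω) (fun m => X m ω) (fun m => Y m ω) (n - j) ∧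
                  v' ∈ tips (fun m => Θ m ω) (fun m => X m ω) (fun m => Y m ω) (n - j)
                then pΘ k * pε j /
                  (L (fun m => Θ m ω) (fun m => X m ω) (fun m => Y m ω) (n - j) : ℝ) ^ 2
                else 0) ∂μ)
    (b : ℝ)
    (hb : 10 * (h M : ℝ) - 6 * (h 1 : ℝ) + 3 * M * (Iε.max' hIε : ℝ) + 2 < b)
    (κA : ℕ)
    (hκA : 1 + max (2 * (h M : ℝ))
        (3 * (h M : ℝ) * ((h M : ℝ) + (Iε.min' hIε : ℝ)) / ((h M : ℝ) - 1)) < (κA : ℝ))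
    (hhM : 1 < h M)
    (i : ℕ) (D : Set Ω)
    (hD : MeasurableSet[sigAlg Θ ε X Y (i - 1)] D)
    (hDsub : D ⊆ {ω | (L (fun m => Θ m ω) (fun m => X m ω) (fun m => Y m ω) i : ℝ) ≤ b})
    (hDpos : 0 < μ D) :
    0 < μ[|D] {ω | StepA (fun m => Θ m ω) (fun m => ε m ω) (fun m => X m ω)
      (fun m => Y m ω) (h M) (Iε.min' hIε) κA i} :=
  stepA_positive_probability_general (mΩ := mΩ) μ M hM2 h Iε hIε pΘ pε hpΘ hpε Θ ε X Y hΘm hεm hXm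
    hYm hmodel hlaw κA i D hD hDpos
end

section
/- In the IOTA DAG model, suppose L(t_i) ≤ b holds and every vertex arriving at a time in [t_i, t_i + κ_A) with κ_A > 2·h_M + 2 satisfies the Step-A conditions. Then for any t_j ∈ (t_i + h_M, t_i + κ_A − h_M), if F(t_{j+1}) − F(t_j) = 0, then F(t_{j+k}) − F(t_{j+k−1}) = 1 for all k = 2, …, h_M; that is, the number of free tips increases by 1 at each of the next h_M − 1 steps. -/
namespace IotaDAG

/- ## Auxiliary lemmas for Statement 6. -/

lemma mem_V_iff {θ : ℕ → ℕ} {n v : ℕ} :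
    v ∈ V θ n ↔ v = 0 ∨ (1 ≤ v ∧ v + θ v < n) := by
  simp [V]

lemma mem_E_iff {θ x y : ℕ → ℕ} {n : ℕ} {p : ℕ × ℕ} :
    p ∈ E θ x y n ↔ ∃ k, 1 ≤ k ∧ k + θ k < n ∧ (p = (k, x k) ∨ p = (k, y k)) :=
  Iff.rfl

lemma mem_tips_iff {θ x y : ℕ → ℕ} {n v : ℕ} :
    v ∈ tips θ x y n ↔ v ∈ V θ n ∧ ∀ a, (a, v) ∉ E θ x y n := Iff.rfl

lemma mem_V'_iff {θ : ℕ → ℕ} {n v : ℕ} :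
    v ∈ V' θ n ↔ 1 ≤ v ∧ v < n ∧ n ≤ v + θ v := Iff.rfl

lemma mem_pend_iff {θ x y : ℕ → ℕ} {n v : ℕ} :
    v ∈ pend θ x y n ↔ v ∈ tips θ x y n ∧ ∃ a ∈ V' θ n, x a = v ∨ y a = v :=
  Iff.rfl

lemma mem_free_iff {θ x y : ℕ → ℕ} {n v : ℕ} :
    v ∈ free θ x y n ↔ v ∈ tips θ x y n ∧ v ∉ pend θ x y n := Iff.rfl

lemma mem_V_le {θ : ℕ → ℕ} {n v : ℕ} (hv : v ∈ V θ n) : v ≤ n := by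
  rw [mem_V_iff] at hv; omega

lemma V_mono {θ : ℕ → ℕ} {m n : ℕ} (hmn : m ≤ n) : V θ m ⊆ V θ n := by
  intro v hv
  rw [mem_V_iff] at hv ⊢
  omega

lemma free_finite {θ x y : ℕ → ℕ} (n : ℕ) : (free θ x y n).Finite :=
  (Set.finite_Iic n).subset (fun v hv => mem_V_le hv.1.1)

/-- Key one-step transition: under Step-A, if the arriving vertex does not pick a
free tip, the set of free tips gains exactly the freshly completed vertex. -/
lemma free_step {θ e x y : ℕ → ℕ} (H ε κA i : ℕ) (hH : 1 < H)
    (hvalid : Valid θ e x y)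
    (hθb : ∀ a, 1 ≤ a → 1 ≤ θ a ∧ θ a ≤ H)
    (hA : StepA θ e x y H ε κA i)
    (n : ℕ) (hn1 : i + H < n) (hn2 : n < i + κA)
    (hx : x n ∉ free θ x y n) :
    free θ x y (n + 1) = insert (n - H) (free θ x y n) := by
  have hAn := hA n (by omega) (by omega) (by omega)
  have hxyn : x n = y n := hAn.2.2.1
  have hAk := hA (n - H) (by omega) (by omega) (by omega)
  have hθk : θ (n - H) = H := hAk.2.1
  have hxyk : x (n - H) = y (n - H) := hAk.2.2.1
  have uniq : ∀ a, 1 ≤ a → a + θ a = n → a = n - H := by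
    intro a ha hae
    have hb := hθb a ha
    have hw : θ a = H := (hA a ha (by omega) (by omega)).2.1
    omega
  have hV : ∀ v, v ∈ V θ (n + 1) ↔ (v ∈ V θ n ∨ v = n - H) := by
    intro v
    rw [mem_V_iff, mem_V_iff]
    constructor
    · rintro (h0 | ⟨h1, h2⟩)
      · exact Or.inl (Or.inl h0)
      · rcases Nat.lt_or_ge (v + θ v) n with hlt | hge
        · exact Or.inl (Or.inr ⟨h1, hlt⟩)
        · exact Or.inr (uniq v h1 (by omega))
    · rintro (hv | rfl)
      · omega
      · exact Or.inr ⟨by omega, by omega⟩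
  have hE : ∀ a v, (a, v) ∈ E θ x y (n + 1) ↔
      ((a, v) ∈ E θ x y n ∨ (a = n - H ∧ v = x (n - H))) := by
    intro a v
    rw [mem_E_iff, mem_E_iff]
    constructor
    · rintro ⟨m, hm1, hm2, hm3⟩
      rcases Nat.lt_or_ge (m + θ m) n with hlt | hge
      · exact Or.inl ⟨m, hm1, hlt, hm3⟩
      · have hm : m = n - H := uniq m hm1 (by omega)
        subst hm
        right
        rcases hm3 with h3 | h3 <;> simp only [Prod.mk.injEq] at h3
        · exact ⟨h3.1, h3.2⟩
        · exact ⟨h3.1, h3.2.trans hxyk.symm⟩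
    · rintro (⟨m, hm1, hm2, hm3⟩ | ⟨rfl, rfl⟩)
      · exact ⟨m, hm1, by omega, hm3⟩
      · exact ⟨n - H, by omega, by omega, Or.inl rfl⟩
  have nosel : ∀ a, 1 ≤ a → a ≤ n → ¬ (x a = n - H ∨ y a = n - H) := by
    intro a ha han hsel
    have hval := hvalid a ha
    have hmem : (n - H) ∈ V θ (a - e a) := by
      rcases hsel with hs | hs
      · have hx1 := hval.1.1
        rwa [hs] at hx1
      · have hy1 := hval.2.1
        rwa [hs] at hy1
    rw [mem_V_iff] at hmem
    omega
  have noedge : ∀ a, (a, (n - H)) ∉ E θ x y (n + 1) := by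
    intro a hmem
    rw [mem_E_iff] at hmem
    obtain ⟨m, hm1, hm2, hm3⟩ := hmem
    have hbm := hθb m hm1
    refine nosel m hm1 (by omega) ?_
    rcases hm3 with h3 | h3 <;> simp only [Prod.mk.injEq] at h3
    · exact Or.inl h3.2.symm
    · exact Or.inr h3.2.symm
  have htips : ∀ v, v ∈ tips θ x y (n + 1) ↔
      ((v ∈ tips θ x y n ∧ v ≠ x (n - H)) ∨ v = n - H) := by
    intro v
    rw [mem_tips_iff, mem_tips_iff]
    constructor
    · rintro ⟨hvV, hvE⟩
      rcases (hV v).1 hvV with hvV' | rfl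
      · left
        refine ⟨⟨hvV', fun a ha => hvE a ((hE a v).2 (Or.inl ha))⟩, ?_⟩
        rintro rfl
        exact hvE (n - H) ((hE (n - H) (x (n - H))).2 (Or.inr ⟨rfl, rfl⟩))
      · exact Or.inr rfl
    · rintro (⟨⟨hvV, hvE⟩, hne⟩ | rfl)
      · refine ⟨(hV v).2 (Or.inl hvV), fun a ha => ?_⟩
        rcases (hE a v).1 ha with hE' | ⟨rfl, rfl⟩
        · exact hvE a hE'
        · exact hne rfl
      · exact ⟨(hV (n - H)).2 (Or.inr rfl), noedge⟩
  ext v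
  simp only [Set.mem_insert_iff]
  constructor
  · rintro ⟨hvt, hvp⟩
    rcases (htips v).1 hvt with ⟨hvtn, hne⟩ | rfl
    · right
      refine ⟨hvtn, ?_⟩
      intro hp
      obtain ⟨-, a, haV', hsel⟩ := hp
      rw [mem_V'_iff] at haV'
      rcases Nat.lt_or_ge (a + θ a) (n + 1) with hlt | hge
      · have ha' : a = n - H := uniq a haV'.1 (by omega)
        subst ha'
        rcases hsel with hs | hs
        · exact hne hs.symm
        · exact hne (hs.symm.trans hxyk.symm)
      · exact hvp ⟨hvt, a, mem_V'_iff.mpr ⟨haV'.1, by omega, hge⟩, hsel⟩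
    · left; rfl
  · rintro (rfl | ⟨hvt, hvp⟩)
    · refine ⟨(htips _).2 (Or.inr rfl), ?_⟩
      rintro ⟨-, a, haV', hsel⟩
      rw [mem_V'_iff] at haV'
      exact nosel a haV'.1 (by omega) hsel
    · have hnex : v ≠ x (n - H) := by
        rintro rfl
        exact hvp ⟨hvt, n - H, mem_V'_iff.mpr ⟨by omega, by omega, by omega⟩,
          Or.inl rfl⟩
      refine ⟨(htips v).2 (Or.inl ⟨hvt, hnex⟩), ?_⟩
      rintro ⟨-, a, haV', hsel⟩
      rw [mem_V'_iff] at haV'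
      rcases Nat.lt_or_ge a n with haln | hage
      · exact hvp ⟨hvt, a, mem_V'_iff.mpr ⟨haV'.1, haln, by omega⟩, hsel⟩
      · have han : a = n := by omega
        subst han
        rcases hsel with hs | hs
        · exact hx (by rw [hs]; exact ⟨hvt, hvp⟩)
        · exact hx (by rw [hxyn, hs]; exact ⟨hvt, hvp⟩)

lemma F_step {θ e x y : ℕ → ℕ} (H ε κA i : ℕ) (hH : 1 < H)
    (hvalid : Valid θ e x y)
    (hθb : ∀ a, 1 ≤ a → 1 ≤ θ a ∧ θ a ≤ H)
    (hA : StepA θ e x y H ε κA i)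
    (n : ℕ) (hn1 : i + H < n) (hn2 : n < i + κA)
    (hx : x n ∉ free θ x y n) :
    F θ x y (n + 1) = F θ x y n + 1 := by
  have hθk : θ (n - H) = H := (hA (n - H) (by omega) (by omega) (by omega)).2.1
  have hnm : (n - H) ∉ free θ x y n := by
    intro hmem
    have hV' := hmem.1.1
    rw [mem_V_iff] at hV'
    omega
  rw [F, F, free_step H ε κA i hH hvalid hθb hA n hn1 hn2 hx,
    Set.ncard_insert_of_notMem hnm (free_finite n)]

/-- If `x j` is a free tip at time `j`, it stays a tip (from the point of view of
the past graphs) up to time `j + H - 2`. -/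
lemma xj_tip {θ e x y : ℕ → ℕ} (H ε κA i j : ℕ) (hH : 1 < H) (hε : 1 ≤ ε)
    (hvalid : Valid θ e x y)
    (hθb : ∀ a, 1 ≤ a → 1 ≤ θ a ∧ θ a ≤ H)
    (hA : StepA θ e x y H ε κA i)
    (hj1 : i + H < j) (hj2 : j + H < i + κA)
    (hfree : x j ∈ free θ x y j)
    (m : ℕ) (hm1 : j - ε ≤ m) (hm2 : m + 2 ≤ j + H) :
    x j ∈ tips θ x y m := by
  have hAj := hA j (by omega) (by omega) (by omega)
  have hej : e j = ε := hAj.1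
  have htipj0 : x j ∈ tips θ x y (j - ε) := by
    have hv := (hvalid j (by omega)).1
    rwa [hej] at hv
  have htipj : x j ∈ tips θ x y j := hfree.1
  refine ⟨V_mono hm1 htipj0.1, ?_⟩
  intro a ha
  rw [mem_E_iff] at ha
  obtain ⟨b, hb1, hb2, hb3⟩ := ha
  have hsel : x b = x j ∨ y b = x j := by
    rcases hb3 with h3 | h3 <;> simp only [Prod.mk.injEq] at h3
    · exact Or.inl h3.2.symm
    · exact Or.inr h3.2.symm
  rcases Nat.lt_or_ge b j with hbj | hbj
  · rcases Nat.lt_or_ge (b + θ b) j with hbe | hbe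
    · refine htipj.2 b ?_
      rw [mem_E_iff]
      refine ⟨b, hb1, hbe, ?_⟩
      rcases hsel with hs | hs
      · exact Or.inl (by rw [hs])
      · exact Or.inr (by rw [hs])
    · exact hfree.2 ⟨htipj, b, mem_V'_iff.mpr ⟨hb1, hbj, hbe⟩, hsel⟩
  · have hbw : θ b = H := (hA b (by omega) (by omega) (by omega)).2.1
    omega

end IotaDAG

open IotaDAG

/-- Suppose `L(t_i) ≤ b` and every vertex arriving at a time in
`[t_i, t_i + κ_A)` with `κ_A > 2 h_M + 2` satisfies the Step-A conditions.  Then for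
`t_j ∈ (t_i + h_M, t_i + κ_A - h_M)`, if `F(t_{j+1}) - F(t_j) = 0` then
`F(t_{j+k}) - F(t_{j+k-1}) = 1` for all `k = 2, …, h_M`. -/
theorem free_tips_keep_increasing
    (M : ℕ) (hM2 : 2 ≤ M)
    (h : ℕ → ℕ) (hpos : 0 < h 1) (hmono : StrictMonoOn h (Set.Icc 1 M))
    (Iε : Finset ℕ) (hIε : Iε.Nonempty) (hεmin : 0 < Iε.min' hIε)
    (θ e x y : ℕ → ℕ)
    (hθ : ∀ n, 1 ≤ n → ∃ k, 1 ≤ k ∧ k ≤ M ∧ θ n = h k)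
    (he : ∀ n, 1 ≤ n → e n ∈ Iε)
    (hvalid : Valid θ e x y)
    (hhM : 1 < h M)
    (b : ℝ) (i : ℕ)
    (hLb : (L θ x y i : ℝ) ≤ b)
    (κA : ℕ) (hκA : 2 * h M + 2 < κA)
    (hA : StepA θ e x y (h M) (Iε.min' hIε) κA i)
    (j : ℕ) (hj₁ : i + h M < j) (hj₂ : j + h M < i + κA)
    (h0 : F θ x y (j + 1) = F θ x y j) :
    ∀ k, 2 ≤ k → k ≤ h M → F θ x y (j + k) = F θ x y (j + k - 1) + 1 := by
  intro k hk2 hkH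
  have hε1 : 1 ≤ Iε.min' hIε := hεmin
  have hθb : ∀ a, 1 ≤ a → 1 ≤ θ a ∧ θ a ≤ h M := by
    intro a ha
    obtain ⟨m, hm1, hmM, hθa⟩ := hθ a ha
    have h1m : h 1 ≤ h m := by
      rcases eq_or_lt_of_le hm1 with heq | hlt
      · rw [← heq]
      · exact (hmono (Set.mem_Icc.mpr ⟨le_refl 1, by omega⟩)
          (Set.mem_Icc.mpr ⟨hm1, hmM⟩) hlt).le
    have hmM' : h m ≤ h M := by
      rcases eq_or_lt_of_le hmM with heq | hlt
      · rw [heq]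
      · exact (hmono (Set.mem_Icc.mpr ⟨hm1, hmM⟩)
          (Set.mem_Icc.mpr ⟨by omega, le_refl M⟩) hlt).le
    omega
  have hfree_j : x j ∈ free θ x y j := by
    by_contra hxj
    have hstep := F_step (h M) (Iε.min' hIε) κA i hhM hvalid hθb hA j
      (by omega) (by omega) hxj
    omega
  have hθj : θ j = h M := (hA j (by omega) (by omega) (by omega)).2.1
  set n := j + k - 1 with hn
  have hxn : x n ∉ free θ x y n := by
    have hAn := hA n (by omega) (by omega) (by omega)
    have hnsub : ¬ tips θ x y (n - Iε.min' hIε) ⊆ free θ x y n := by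
      intro hsub
      have hxjt : x j ∈ tips θ x y (n - Iε.min' hIε) :=
        xj_tip (h M) (Iε.min' hIε) κA i j hhM hε1 hvalid hθb hA
          (by omega) (by omega) hfree_j (n - Iε.min' hIε) (by omega) (by omega)
      have hxjf := hsub hxjt
      exact hxjf.2 ⟨hxjf.1, j,
        mem_V'_iff.mpr ⟨by omega, by omega, by omega⟩, Or.inl rfl⟩
    exact (hAn.2.2.2.1 hnsub).2
  have hstep := F_step (h M) (Iε.min' hIε) κA i hhM hvalid hθb hA n
    (by omega) (by omega) hxn
  have hjk : j + k = n + 1 := by omega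
  rw [hjk, hstep]
end

section
/- In the IOTA DAG model, suppose L(t_i) ≤ b holds and the Step-A and Step-B events A_i and B_i occur. Let c_i := F(t_i + κ_B) + |V'(t_i + κ_B)| and let (i,1,1), …, (i,1,c_i) denote the elements of F(t_i + κ_B) ∪ V'(t_i + κ_B) listed in increasing order. Then for any time t_n > t_i + κ_B + h_M and any vertex v ∈ V(t_i + κ_B) \ F(t_i + κ_B), the vertex v is reachable (by a directed path in the limiting graph ∪_t G(t)) from at least one of the vertices (i,1,1), …, (i,1,c_i). -/
open IotaDAG

lemma IotaDAG.reach_aux (θ e x y : ℕ → ℕ) (hvalid : Valid θ e x y) (n : ℕ) :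
    ∀ d v, n - v ≤ d → v ∈ V θ n →
      ∃ w ∈ free θ x y n ∪ V' θ n, Reach x y w v := by
  intro d
  induction d with
  | zero =>
    intro v hd hv
    -- n - v = 0, i.e. n ≤ v; but v ∈ V θ n forces v = 0 and n = 0... handle directly
    by_cases hvf : v ∈ free θ x y n
    · exact ⟨v, Or.inl hvf, Relation.ReflTransGen.refl⟩
    by_cases hvt : v ∈ tips θ x y n
    · have hvp : v ∈ pend θ x y n := by
        by_contra hnp
        exact hvf ⟨hvt, hnp⟩
      obtain ⟨-, j, hjV', hj⟩ := hvp
      exact ⟨j, Or.inr hjV',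
        Relation.ReflTransGen.single ⟨hjV'.1, hj.imp id id⟩⟩
    · -- v ∈ V θ n, not a tip: some edge (k, v) ∈ E, with k + θ k < n, so k < n ≤ v,
      -- but parents are smaller: contradiction with k > v ≥ n > k.
      exfalso
      have : ¬ ∀ m, (m, v) ∉ E θ x y n := fun hall => hvt ⟨hv, hall⟩
      push_neg at this
      obtain ⟨m, k, hk1, hklt, hp⟩ := this
      have hkv : x k = v ∨ y k = v := by
        rcases hp with hp | hp <;> [left; right] <;>
          exact (congrArg Prod.snd hp).symm
      -- v is a parent of k, hence v ∈ V θ (k - e k), so v = 0 or v < k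
      have hxk := hvalid k hk1
      have hvmem : v ∈ V θ (k - e k) := by
        rcases hkv with hkv | hkv
        · exact hkv ▸ (hxk.1).1
        · exact hkv ▸ (hxk.2).1
      have hkn : k < n := lt_of_le_of_lt (Nat.le_add_right k (θ k)) hklt
      rcases hvmem with h0 | ⟨h1, h2⟩
      · simp only [Set.mem_singleton_iff] at h0; omega
      · omega
  | succ d ih =>
    intro v hd hv
    by_cases hvf : v ∈ free θ x y n
    · exact ⟨v, Or.inl hvf, Relation.ReflTransGen.refl⟩
    by_cases hvt : v ∈ tips θ x y n
    · have hvp : v ∈ pend θ x y n := by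
        by_contra hnp
        exact hvf ⟨hvt, hnp⟩
      obtain ⟨-, j, hjV', hj⟩ := hvp
      exact ⟨j, Or.inr hjV',
        Relation.ReflTransGen.single ⟨hjV'.1, hj.imp id id⟩⟩
    · have : ¬ ∀ m, (m, v) ∉ E θ x y n := fun hall => hvt ⟨hv, hall⟩
      push_neg at this
      obtain ⟨m, k, hk1, hklt, hp⟩ := this
      have hkv : x k = v ∨ y k = v := by
        rcases hp with hp | hp <;> [left; right] <;>
          exact (congrArg Prod.snd hp).symm
      have hxk := hvalid k hk1
      have hvmem : v ∈ V θ (k - e k) := by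
        rcases hkv with hkv | hkv
        · exact hkv ▸ (hxk.1).1
        · exact hkv ▸ (hxk.2).1
      have hvk : v < k := by
        rcases hvmem with h0 | ⟨h1, h2⟩
        · simp only [Set.mem_singleton_iff] at h0; omega
        · omega
      have hkn : k < n := lt_of_le_of_lt (Nat.le_add_right k (θ k)) hklt
      have hkV : k ∈ V θ n := Or.inr ⟨hk1, hklt⟩
      obtain ⟨w, hw, hreach⟩ := ih k (by omega) hkV
      exact ⟨w, hw, hreach.tail ⟨hk1, hkv⟩⟩

/-- Suppose `L(t_i) ≤ b` and the Step-A and Step-B events occur.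
Let `c_i = F(t_i + κ_B) + |V'(t_i + κ_B)|` and let `(i,1,1), …, (i,1,c_i)` be the
elements of `F(t_i + κ_B) ∪ V'(t_i + κ_B)` in increasing order (the labelling `ξ`).
Then for any time `t_n > t_i + κ_B + h_M` and any vertex
`v ∈ V(t_i + κ_B) \ F(t_i + κ_B)`, `v` is reachable in the limiting graph from at
least one of the vertices `(i,1,1), …, (i,1,c_i)`. -/
theorem reachable_from_first_column
    (M : ℕ) (hM2 : 2 ≤ M)
    (h : ℕ → ℕ) (hpos : 0 < h 1) (hmono : StrictMonoOn h (Set.Icc 1 M))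
    (Iε : Finset ℕ) (hIε : Iε.Nonempty) (hεmin : 0 < Iε.min' hIε)
    (θ e x y : ℕ → ℕ)
    (hθ : ∀ n, 1 ≤ n → ∃ k, 1 ≤ k ∧ k ≤ M ∧ θ n = h k)
    (he : ∀ n, 1 ≤ n → e n ∈ Iε)
    (hvalid : Valid θ e x y)
    (hhM : 1 < h M)
    (b : ℝ)
    (hb : 10 * (h M : ℝ) - 6 * (h 1 : ℝ) + 3 * M * (Iε.max' hIε : ℝ) + 2 < b)
    (κA κB : ℕ)
    (hκA : 1 + max (2 * (h M : ℝ))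
        (3 * (h M : ℝ) * ((h M : ℝ) + (Iε.min' hIε : ℝ)) / ((h M : ℝ) - 1)) < (κA : ℝ))
    (hκB : κB = κA + Iε.min' hIε + 1)
    (i : ℕ)
    (hLb : (L θ x y i : ℝ) ≤ b)
    (hA : StepA θ e x y (h M) (Iε.min' hIε) κA i)
    (hB : StepB θ e x y (h M) (Iε.min' hIε) κA κB i) :
    ∀ n, i + κB + h M < n →
      ∀ v ∈ V θ (i + κB) \ free θ x y (i + κB),
        ∃ k, 1 ≤ k ∧ k ≤ ci θ x y κB i ∧ Reach x y (ξ θ x y κB i 1 k) v := by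
  classical
  intro n hn v hv
  set N := i + κB with hN
  obtain ⟨hvV, -⟩ := hv
  obtain ⟨w, hw, hreach⟩ :=
    IotaDAG.reach_aux θ e x y hvalid N (N - v) v le_rfl hvV
  -- the set of candidates
  set p : ℕ → Prop := fun u => u ∈ free θ x y N ∪ V' θ N with hp
  have hsub : setOf p ⊆ Set.Iio N := by
    intro u hu
    rcases hu with hu | hu
    · rcases hu.1.1 with h0 | ⟨h1, h2⟩
      · simp only [Set.mem_singleton_iff] at h0
        subst h0
        have : 1 ≤ κB := by omega
        simp only [Set.mem_Iio]; omega
      · simp only [Set.mem_Iio]; omega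
    · exact hu.2.1
  have hfin : (setOf p).Finite := (Set.finite_Iio N).subset hsub
  have hdisj : Disjoint (free θ x y N) (V' θ N) := by
    rw [Set.disjoint_left]
    intro u hu hu'
    rcases hu.1.1 with h0 | ⟨h1, h2⟩
    · simp only [Set.mem_singleton_iff] at h0
      exact absurd (h0 ▸ hu'.1) (by omega)
    · exact absurd hu'.2.2 (by omega)
  have hci : ci θ x y κB i = (setOf p).ncard := by
    have hf1 : (free θ x y N).Finite :=
      hfin.subset (fun u hu => Set.mem_union_left _ hu)
    have hf2 : (V' θ N).Finite :=
      hfin.subset (fun u hu => Set.mem_union_right _ hu)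
    have : setOf p = free θ x y N ∪ V' θ N := rfl
    rw [ci, F, this, Set.ncard_union_eq hdisj hf1 hf2]
  have hwp : p w := hw
  have hknth : Nat.nth p (Nat.count p w) = w := Nat.nth_count hwp
  have hcount : Nat.count p w < (setOf p).ncard := by
    have := Nat.count_lt_card hfin hwp
    rwa [Set.ncard_eq_toFinset_card _ hfin]
  refine ⟨Nat.count p w + 1, by omega, by omega, ?_⟩
  have hxi : ξ θ x y κB i 1 (Nat.count p w + 1) = w := by
    rw [ξ]
    simp only [le_refl, if_true]
    simpa [hp, hN] using hknth
  rwa [hxi]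
end

section
/- In the IOTA DAG model, suppose L(t_i) ≤ b holds. Then the number of free tips at time t_i + κ_B satisfies F(t_i + κ_B) ≤ b + M·κ_B, the number of arrived vertices with unfinished POW satisfies |V'(t_i + κ_B)| = h_M, and consequently c_i := F(t_i + κ_B) + |V'(t_i + κ_B)| ≤ b + M·κ_B + h_M. -/
open IotaDAG

/-- Suppose `L(t_i) ≤ b` (and, as enforced by the Step-A and Step-B
events, every vertex arriving at a time in `[t_i, t_i + κ_B)` has POW duration `h_M`).
Then `F(t_i + κ_B) ≤ b + M κ_B`, `|V'(t_i + κ_B)| = h_M`, and consequently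
`c_i = F(t_i + κ_B) + |V'(t_i + κ_B)| ≤ b + M κ_B + h_M`. -/
theorem ci_bound
    (M : ℕ) (hM2 : 2 ≤ M)
    (h : ℕ → ℕ) (hpos : 0 < h 1) (hmono : StrictMonoOn h (Set.Icc 1 M))
    (Iε : Finset ℕ) (hIε : Iε.Nonempty) (hεmin : 0 < Iε.min' hIε)
    (θ e x y : ℕ → ℕ)
    (hθ : ∀ n, 1 ≤ n → ∃ k, 1 ≤ k ∧ k ≤ M ∧ θ n = h k)
    (he : ∀ n, 1 ≤ n → e n ∈ Iε)
    (hvalid : Valid θ e x y)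
    (hhM : 1 < h M)
    (κA κB : ℕ)
    (hκA : 1 + max (2 * (h M : ℝ))
        (3 * (h M : ℝ) * ((h M : ℝ) + (Iε.min' hIε : ℝ)) / ((h M : ℝ) - 1)) < (κA : ℝ))
    (hκB : κB = κA + Iε.min' hIε + 1)
    (b : ℝ) (i : ℕ)
    (hLb : (L θ x y i : ℝ) ≤ b)
    (hθA : ∀ j, 1 ≤ j → i ≤ j → j < i + κB → θ j = h M) :
    (F θ x y (i + κB) : ℝ) ≤ b + M * κB ∧
      (V' θ (i + κB)).ncard = h M ∧
      (ci θ x y κB i : ℝ) ≤ b + M * κB + h M := by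
  -- bounds on θ
  have hθbd : ∀ n, 1 ≤ n → 1 ≤ θ n ∧ θ n ≤ h M := by
    intro n hn
    obtain ⟨k, hk1, hkM, hθn⟩ := hθ n hn
    have hmem : k ∈ Set.Icc 1 M := ⟨hk1, hkM⟩
    have h1M : (1:ℕ) ∈ Set.Icc 1 M := ⟨le_refl 1, by omega⟩
    have hMM : M ∈ Set.Icc 1 M := ⟨by omega, le_refl M⟩
    have hlo := hmono.monotoneOn h1M hmem hk1
    have hhi := hmono.monotoneOn hmem hMM hkM
    omega
  have hMpos : 1 ≤ h M := by
    have := hmono.monotoneOn ⟨le_refl 1, by omega⟩ ⟨by omega, le_refl M⟩ (by omega)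
    omega
  -- κA is large
  have hκA' : 2 * h M + 1 < κA := by
    have h1 : (2 * (h M:ℝ)) ≤ max (2*(h M:ℝ))
        (3 * (h M : ℝ) * ((h M : ℝ) + (Iε.min' hIε : ℝ)) / ((h M : ℝ) - 1)) :=
      le_max_left _ _
    have h2 : (2 * (h M:ℝ) + 1 : ℝ) < κA := by linarith
    exact_mod_cast h2
  have hεm1 : 1 ≤ Iε.min' hIε := hεmin
  have hκBge : 2 * h M + 4 ≤ κB := by omega
  -- V' computation
  have hV' : V' θ (i + κB) = Set.Ico (i + κB - h M) (i + κB) := by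
    ext k
    simp only [V', Set.mem_setOf_eq, Set.mem_Ico]
    constructor
    · rintro ⟨hk1, hklt, hge⟩
      have hθk := (hθbd k hk1).2
      omega
    · rintro ⟨hlo, hhi⟩
      have hk1 : 1 ≤ k := by omega
      have hki : i ≤ k := by omega
      have hθk : θ k = h M := hθA k hk1 hki hhi
      omega
  have hV'card : (V' θ (i + κB)).ncard = h M := by
    rw [hV', ← Finset.coe_Ico, Set.ncard_coe_finset, Nat.card_Ico]
    omega
  -- tips are finite
  have htipsFin : ∀ n, (tips θ x y n).Finite := by
    intro n
    apply Set.Finite.subset (Set.finite_Iic n)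
    intro v hv
    rcases hv.1 with h0 | ⟨h1, h2⟩
    · simp only [Set.mem_singleton_iff] at h0
      simp [h0]
    · simp only [Set.mem_Iic]
      omega
  -- tips at time i+κB are old tips or newcomers
  have hsub : tips θ x y (i + κB) ⊆ tips θ x y i ∪ Set.Ico (i - h M) (i + κB) := by
    intro v hv
    obtain ⟨hvV, hvE⟩ := hv
    by_cases hvi : v ∈ V θ i
    · left
      refine ⟨hvi, fun j hj => hvE j ?_⟩
      obtain ⟨k, hk1, hklt, hor⟩ := hj
      exact ⟨k, hk1, by omega, hor⟩
    · right
      rcases hvV with h0 | ⟨h1, h2⟩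
      · exact absurd (Or.inl h0) hvi
      · have hθv := (hθbd v h1).2
        have hnot : ¬ (v + θ v < i) := fun hc => hvi (Or.inr ⟨h1, hc⟩)
        simp only [Set.mem_Ico]
        omega
  have hLle : L θ x y (i + κB) ≤ L θ x y i + (κB + h M) := by
    have h1 := Set.ncard_le_ncard hsub ((htipsFin i).union (Set.finite_Ico _ _))
    have h2 := Set.ncard_union_le (tips θ x y i) (Set.Ico (i - h M) (i + κB))
    have h3 : (Set.Ico (i - h M) (i + κB)).ncard = (i + κB) - (i - h M) := by
      rw [← Finset.coe_Ico, Set.ncard_coe_finset, Nat.card_Ico]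
    unfold L at *
    omega
  have hFL : F θ x y (i + κB) ≤ L θ x y (i + κB) :=
    Set.ncard_le_ncard Set.diff_subset (htipsFin _)
  have hF : F θ x y (i + κB) ≤ L θ x y i + (κB + h M) := le_trans hFL hLle
  have hMκ : 2 * κB ≤ M * κB := Nat.mul_le_mul_right κB hM2
  have hκM : κB + h M ≤ M * κB := by omega
  have hFR : (F θ x y (i + κB) : ℝ) ≤ b + M * κB := by
    have c1 : (F θ x y (i + κB) : ℝ) ≤ (L θ x y i : ℝ) + ((κB + h M : ℕ) : ℝ) := by
      exact_mod_cast hF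
    have c2 : ((κB + h M : ℕ) : ℝ) ≤ ((M * κB : ℕ) : ℝ) := by exact_mod_cast hκM
    have c3 : ((M * κB : ℕ) : ℝ) = (M : ℝ) * κB := by push_cast; ring
    linarith [hLb, c1, c2, c3.le, c3.ge]
  refine ⟨hFR, hV'card, ?_⟩
  have hci : ci θ x y κB i = F θ x y (i + κB) + h M := by
    rw [ci, hV'card]
  rw [hci]
  push_cast
  linarith
end

section
/- In the IOTA DAG model, suppose L(t_i) ≤ b holds and the Step-A, Step-B and Step-C events A_i, B_i and C_i all occur. Then: (1) every vertex v arriving at a time v > t_i + κ_C has a directed path in the limiting graph ∪_t G(t) to some vertex in {(i, 2c_i, 1), …, (i, 2c_i, c_i)}; and (2) every vertex v arriving at a time v > t_i + κ_C has a directed path in ∪_t G(t) to every vertex in {(i,1,1), …, (i,1,c_i)}. -/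
open IotaDAG

set_option maxHeartbeats 1000000 in
/-- Suppose `L(t_i) ≤ b` and the Step-A, Step-B and Step-C events
all occur.  Then: (1) every vertex `v` arriving at a time `v > t_i + κ_C` has a
directed path in the limiting graph to some vertex `(i, 2 c_i, k)`, `1 ≤ k ≤ c_i`;
and (2) every such `v` has a directed path to every vertex `(i, 1, k)`, `1 ≤ k ≤ c_i`. -/
theorem paths_through_interchange
    (M : ℕ) (hM2 : 2 ≤ M)
    (h : ℕ → ℕ) (hpos : 0 < h 1) (hmono : StrictMonoOn h (Set.Icc 1 M))
    (Iε : Finset ℕ) (hIε : Iε.Nonempty) (hεmin : 0 < Iε.min' hIε)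
    (θ e x y : ℕ → ℕ)
    (hθ : ∀ n, 1 ≤ n → ∃ k, 1 ≤ k ∧ k ≤ M ∧ θ n = h k)
    (he : ∀ n, 1 ≤ n → e n ∈ Iε)
    (hvalid : Valid θ e x y)
    (hhM : 1 < h M)
    (b : ℝ)
    (hb : 10 * (h M : ℝ) - 6 * (h 1 : ℝ) + 3 * M * (Iε.max' hIε : ℝ) + 2 < b)
    (κA κB κC : ℕ)
    (hκA : 1 + max (2 * (h M : ℝ))
        (3 * (h M : ℝ) * ((h M : ℝ) + (Iε.min' hIε : ℝ)) / ((h M : ℝ) - 1)) < (κA : ℝ))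
    (hκB : κB = κA + Iε.min' hIε + 1)
    (hκC : (κC : ℝ) = κB + 2 * (b + M * κB + h M) ^ 2 + h M + Iε.max' hIε + 1)
    (i : ℕ)
    (hLb : (L θ x y i : ℝ) ≤ b)
    (hA : StepA θ e x y (h M) (Iε.min' hIε) κA i)
    (hB : StepB θ e x y (h M) (Iε.min' hIε) κA κB i)
    (hC : StepC θ e x y (h M) (Iε.min' hIε) κB κC i) :
    (∀ v, i + κC < v →
        ∃ k, 1 ≤ k ∧ k ≤ ci θ x y κB i ∧
          Reach x y v (ξ θ x y κB i (2 * ci θ x y κB i) k)) ∧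
      ∀ v, i + κC < v →
        ∀ k, 1 ≤ k → k ≤ ci θ x y κB i → Reach x y v (ξ θ x y κB i 1 k) := by

    classical
    -- abbreviations
    set c := ci θ x y κB i with hc
    -- ## basic numeric facts
    have hεmin1 : 1 ≤ Iε.min' hIε := hεmin
    have hεmm : Iε.min' hIε ≤ Iε.max' hIε :=
      Finset.min'_le _ _ (Iε.max'_mem hIε)
    have hH2 : 2 ≤ h M := hhM
    have hM1 : 1 ≤ M := by omega
    have hθle : ∀ n, 1 ≤ n → θ n ≤ h M := by
      intro n hn
      obtain ⟨k, hk1, hkM, hθn⟩ := hθ n hn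
      rcases eq_or_lt_of_le hkM with rfl | hlt
      · omega
      · have := hmono (Set.mem_Icc.mpr ⟨hk1, hkM⟩) (Set.mem_Icc.mpr ⟨hM1, le_refl M⟩) hlt
        omega
    have hemax : ∀ n, 1 ≤ n → e n ≤ Iε.max' hIε := fun n hn => Finset.le_max' _ _ (he n hn)
    have hemin : ∀ n, 1 ≤ n → Iε.min' hIε ≤ e n := fun n hn => Finset.min'_le _ _ (he n hn)
    have hκA' : 2 * h M + 2 ≤ κA := by
      have h1 : (1 : ℝ) + 2 * (h M : ℝ) ≤ 1 + max (2 * (h M : ℝ))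
          (3 * (h M : ℝ) * ((h M : ℝ) + (Iε.min' hIε : ℝ)) / ((h M : ℝ) - 1)) := by
        have := le_max_left (2 * (h M : ℝ))
          (3 * (h M : ℝ) * ((h M : ℝ) + (Iε.min' hIε : ℝ)) / ((h M : ℝ) - 1))
        linarith
      have h2 : ((2 * h M + 1 : ℕ) : ℝ) < (κA : ℝ) := by push_cast; linarith
      have h3 : 2 * h M + 1 < κA := by exact_mod_cast h2
      omega
    have hbase2 : 2 ≤ i + κB := by omega
    -- ## finiteness
    have hTfin : ∀ n, (tips θ x y n).Finite := by
      intro n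
      apply Set.Finite.subset (Set.finite_Iic n)
      intro u hu
      obtain ⟨huV, -⟩ := hu
      simp only [V, Set.mem_union, Set.mem_singleton_iff, Set.mem_setOf_eq] at huV
      simp only [Set.mem_Iic]
      omega
    have hV'fin : ∀ n, (V' θ n).Finite := by
      intro n
      apply Set.Finite.subset (Set.finite_Iic n)
      intro u hu
      obtain ⟨h1, h2, h3⟩ := hu
      simp only [Set.mem_Iic]; omega
    have hFrfin : (free θ x y (i + κB)).Finite :=
      Set.Finite.subset (hTfin (i + κB)) Set.diff_subset
    -- ## c = ncard (free ∪ V')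
    have hdisj : Disjoint (free θ x y (i + κB)) (V' θ (i + κB)) := by
      rw [Set.disjoint_left]
      intro u hu hu'
      obtain ⟨⟨huV, -⟩, -⟩ := hu
      obtain ⟨h1, h2, h3⟩ := hu'
      simp only [V, Set.mem_union, Set.mem_singleton_iff, Set.mem_setOf_eq] at huV
      omega
    have hcF : c = F θ x y (i + κB) + (V' θ (i + κB)).ncard := by rw [hc]; rfl
    have hcard : c = (free θ x y (i + κB) ∪ V' θ (i + κB)).ncard := by
      rw [Set.ncard_union_eq hdisj hFrfin (hV'fin _), hcF]; rfl
    -- ## c ≥ 1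
    have hθB : θ (i + κB - 1) = h M := by
      obtain ⟨hθj, -, -, -⟩ := hB (i + κB - 1) (by omega) (by omega) (by omega)
      exact hθj
    have hV'ne : (V' θ (i + κB)).Nonempty := by
      refine ⟨i + κB - 1, ⟨by omega, by omega, by omega⟩⟩
    have hc1 : 1 ≤ c := by
      have := (Set.ncard_pos (hV'fin (i + κB))).mpr hV'ne
      omega
    have hc0 : 0 < c := hc1
    -- ## upper bounds on c
    have hV'card : (V' θ (i + κB)).ncard ≤ h M := by
      have hsub : V' θ (i + κB) ⊆ Set.Ico (i + κB - h M) (i + κB) := by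
        intro u hu
        obtain ⟨h1, h2, h3⟩ := hu
        have := hθle u h1
        simp only [Set.mem_Ico]; omega
      have h1 := Set.ncard_le_ncard hsub (by rw [← Finset.coe_Ico]; exact (Finset.Ico _ _).finite_toSet)
      have h2 : (Set.Ico (i + κB - h M) (i + κB)).ncard = (i + κB) - (i + κB - h M) := by
        rw [← Finset.coe_Ico, Set.ncard_coe_finset, Nat.card_Ico]
      omega
    have hLbase : (tips θ x y (i + κB)).ncard ≤ L θ x y i + (κB + h M) := by
      have hsub : tips θ x y (i + κB) ⊆ tips θ x y i ∪ Set.Ico (i - h M) (i + κB) := by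
        intro u hu
        obtain ⟨huV, hnoe⟩ := hu
        have hmono' : ∀ w, (w, u) ∈ E θ x y i → False := by
          intro w hw
          obtain ⟨k', hk1, hk2, hk3⟩ := hw
          exact hnoe w ⟨k', hk1, by omega, hk3⟩
        simp only [V, Set.mem_union, Set.mem_singleton_iff, Set.mem_setOf_eq] at huV
        rcases huV with rfl | ⟨h1, h2⟩
        · exact Or.inl ⟨Or.inl rfl, fun w hw => hmono' w hw⟩
        · by_cases hVi : u + θ u < i
          · exact Or.inl ⟨Or.inr ⟨h1, hVi⟩, fun w hw => hmono' w hw⟩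
          · have := hθle u h1
            exact Or.inr (Set.mem_Ico.mpr ⟨by omega, by omega⟩)
      have h1 := Set.ncard_le_ncard hsub
        ((hTfin i).union (by rw [← Finset.coe_Ico]; exact (Finset.Ico _ _).finite_toSet))
      have h2 := Set.ncard_union_le (tips θ x y i) (Set.Ico (i - h M) (i + κB))
      have h3 : (Set.Ico (i - h M) (i + κB)).ncard = (i + κB) - (i - h M) := by
        rw [← Finset.coe_Ico, Set.ncard_coe_finset, Nat.card_Ico]
      have h4 : (i + κB) - (i - h M) ≤ κB + h M := by omega
      calc (tips θ x y (i + κB)).ncard ≤ _ := h1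
        _ ≤ _ := h2
        _ ≤ L θ x y i + (κB + h M) := by rw [h3]; unfold L; omega
    have hcN : c ≤ L θ x y i + κB + 2 * h M := by
      have hF : F θ x y (i + κB) ≤ (tips θ x y (i + κB)).ncard :=
        Set.ncard_le_ncard Set.diff_subset (hTfin _)
      omega
    have hcQ : (c : ℝ) ≤ b + (M : ℝ) * (κB : ℝ) + (h M : ℝ) := by
      have h1 : (c : ℝ) ≤ (L θ x y i : ℝ) + (κB : ℝ) + 2 * (h M : ℝ) := by
        exact_mod_cast Nat.cast_le.mpr hcN |>.trans (by push_cast; linarith)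
      have hκBH : (h M : ℝ) ≤ (κB : ℝ) := by
        have : h M ≤ κB := by omega
        exact_mod_cast this
      have hM2' : (2 : ℝ) ≤ (M : ℝ) := by exact_mod_cast hM2
      have hκB0 : (0 : ℝ) ≤ (κB : ℝ) := by positivity
      nlinarith [hLb]
    -- ## the master numeric inequality
    have hcc : c ≤ c * c := Nat.le_mul_of_pos_left c hc0
    have Kmaster : κB + 2 * (c * c) + h M + Iε.max' hIε + 1 ≤ κC := by
      have hc0R : (0 : ℝ) ≤ (c : ℝ) := by positivity
      have hQ0 : (0 : ℝ) ≤ b + (M : ℝ) * (κB : ℝ) + (h M : ℝ) := le_trans hc0R hcQ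
      have hsq : (c : ℝ) * (c : ℝ) ≤ (b + (M : ℝ) * (κB : ℝ) + (h M : ℝ)) ^ 2 := by
        nlinarith
      have hR : ((κB + 2 * (c * c) + h M + Iε.max' hIε + 1 : ℕ) : ℝ) ≤ (κC : ℝ) := by
        push_cast
        rw [hκC]
        push_cast
        nlinarith
      exact_mod_cast hR
    have hmul : (2 * c - 2) * c + 2 * c = 2 * (c * c) := by
      obtain ⟨d, hd⟩ : ∃ d, c = d + 1 := ⟨c - 1, by omega⟩
      have h1 : 2 * c - 2 = 2 * d := by omega
      rw [h1, hd]; ring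
    -- ## ξ evaluation
    have hxiv : ∀ j k, 2 ≤ j → ξ θ x y κB i j k = i + κB - 1 + (j - 2) * c + k := by
      intro j k hj
      rw [ξ, if_neg (by omega), ← hc]
    have hxi1 : ∀ k, ξ θ x y κB i 1 k =
        Nat.nth (fun v => v ∈ free θ x y (i + κB) ∪ V' θ (i + κB)) (k - 1) := by
      intro k
      rw [ξ, if_pos le_rfl]
    -- division helper
    have divmod : ∀ a r, r < c → (a * c + r) / c = a ∧ (a * c + r) % c = r := by
      intro a r hr
      constructor
      · rw [add_comm, Nat.add_mul_div_right _ _ hc0, Nat.div_eq_of_lt hr]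
        omega
      · rw [add_comm, Nat.add_mul_mod_self_right, Nat.mod_eq_of_lt hr]
    -- ## the single-step lemma inside the interchange
    have stepL : ∀ j k, 2 ≤ j → j ≤ 2 * c → 1 ≤ k → k ≤ c →
        x (ξ θ x y κB i j k) = ξ θ x y κB i (j - 1) (max 1 (k - 1)) ∧
        y (ξ θ x y κB i j k) = ξ θ x y κB i (j - 1) (min (k + 1) c) ∧
        1 ≤ ξ θ x y κB i j k := by
      intro j k hj2 hj hk1 hkc
      have hv : ξ θ x y κB i j k = i + κB - 1 + (j - 2) * c + k := hxiv j k hj2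
      have hj2c : (j - 2) * c ≤ (2 * c - 2) * c := Nat.mul_le_mul_right c (by omega)
      have hvC : ξ θ x y κB i j k ≤ i + κC := by omega
      have hvb : i + κB ≤ ξ θ x y κB i j k := by omega
      obtain ⟨hθv, hev, hxv, hyv⟩ := hC _ (by omega) hvb hvC
      have hsub : ξ θ x y κB i j k - (i + κB) = (j - 2) * c + (k - 1) := by omega
      obtain ⟨hdiv, hmod⟩ := divmod (j - 2) (k - 1) (by omega)
      rw [hsub, hdiv, hmod] at hxv hyv
      have e1 : 1 + (j - 2) = j - 1 := by omega
      have e2 : k - 1 + 2 = k + 1 := by omega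
      rw [e1] at hxv hyv
      rw [e2] at hyv
      exact ⟨hxv, hyv, by omega⟩
    -- ## many left / right steps
    have Lmany : ∀ a j k, 1 ≤ j → j ≤ 2 * c → 1 ≤ k → k ≤ c → a + 1 ≤ j →
        Reach x y (ξ θ x y κB i j k) (ξ θ x y κB i (j - a) (max 1 (k - a))) := by
      intro a
      induction a with
      | zero =>
        intro j k hj1 hj hk1 hkc ha
        have h2 : max 1 (k - 0) = k := by omega
        have h3 : j - 0 = j := by omega
        rw [h2, h3]
        exact Relation.ReflTransGen.refl
      | succ a iha =>
        intro j k hj1 hj hk1 hkc ha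
        have hj2 : 2 ≤ j := by omega
        obtain ⟨hxs, hys, hv1⟩ := stepL j k hj2 hj hk1 hkc
        have hedge : edgeRel x y (ξ θ x y κB i j k) (ξ θ x y κB i (j - 1) (max 1 (k - 1))) :=
          ⟨hv1, Or.inl hxs⟩
        have hrest := iha (j - 1) (max 1 (k - 1)) (by omega) (by omega) (by omega) (by omega) (by omega)
        have e1 : j - 1 - a = j - (a + 1) := by omega
        have e2 : max 1 (max 1 (k - 1) - a) = max 1 (k - (a + 1)) := by omega
        rw [e1, e2] at hrest
        exact Relation.ReflTransGen.head hedge hrest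
    have Rmany : ∀ a j k, 1 ≤ j → j ≤ 2 * c → 1 ≤ k → k ≤ c → a + 1 ≤ j →
        Reach x y (ξ θ x y κB i j k) (ξ θ x y κB i (j - a) (min (k + a) c)) := by
      intro a
      induction a with
      | zero =>
        intro j k hj1 hj hk1 hkc ha
        have h2 : min (k + 0) c = k := by omega
        have h3 : j - 0 = j := by omega
        rw [h2, h3]
        exact Relation.ReflTransGen.refl
      | succ a iha =>
        intro j k hj1 hj hk1 hkc ha
        have hj2 : 2 ≤ j := by omega
        obtain ⟨hxs, hys, hv1⟩ := stepL j k hj2 hj hk1 hkc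
        have hedge : edgeRel x y (ξ θ x y κB i j k) (ξ θ x y κB i (j - 1) (min (k + 1) c)) :=
          ⟨hv1, Or.inr hys⟩
        have hrest := iha (j - 1) (min (k + 1) c) (by omega) (by omega) (by omega) (by omega) (by omega)
        have e1 : j - 1 - a = j - (a + 1) := by omega
        have e2 : min (min (k + 1) c + a) c = min (k + (a + 1)) c := by omega
        rw [e1, e2] at hrest
        exact Relation.ReflTransGen.head hedge hrest
    -- ## from the last row to every first-row vertex
    have part2 : ∀ k k', 1 ≤ k → k ≤ c → 1 ≤ k' → k' ≤ c →
        Reach x y (ξ θ x y κB i (2 * c) k) (ξ θ x y κB i 1 k') := by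
      intro k k' hk1 hkc hk1' hkc'
      have hL := Lmany (2 * c - k') (2 * c) k (by omega) le_rfl hk1 hkc (by omega)
      have e1 : 2 * c - (2 * c - k') = k' := by omega
      have e2 : max 1 (k - (2 * c - k')) = 1 := by omega
      rw [e1, e2] at hL
      have hR := Rmany (k' - 1) k' 1 (by omega) (by omega) le_rfl hc1 (by omega)
      have e3 : k' - (k' - 1) = 1 := by omega
      have e4 : min (1 + (k' - 1)) c = k' := by omega
      rw [e3, e4] at hR
      exact hL.trans hR
    -- ## every first-row element has a child in row 2
    have childS : ∀ u, u ∈ free θ x y (i + κB) ∪ V' θ (i + κB) →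
        ∃ w, 1 ≤ w ∧ w + θ w < i + κB + c + h M + 1 ∧ (x w = u ∨ y w = u) := by
      intro u hu
      set p : ℕ → Prop := fun v => v ∈ free θ x y (i + κB) ∪ V' θ (i + κB) with hpd
      haveI : DecidablePred p := Classical.decPred p
      have hup : p u := hu
      have hkc : Nat.count p u + 1 ≤ c := by
        have hSfin : (free θ x y (i + κB) ∪ V' θ (i + κB)).Finite := hFrfin.union (hV'fin _)
        have hsub : insert u ((Finset.range u).filter p) ⊆ hSfin.toFinset := by
          intro m hm
          rw [Finset.mem_insert] at hm
          rcases hm with rfl | hm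
          · exact hSfin.mem_toFinset.mpr hup
          · exact hSfin.mem_toFinset.mpr ((Finset.mem_filter.mp hm).2)
        have h1 : (insert u ((Finset.range u).filter p)).card
            = Nat.count p u + 1 := by
          rw [Finset.card_insert_of_notMem (by simp), Nat.count_eq_card_filter_range]
        have h2 := Finset.card_le_card hsub
        have h3 : hSfin.toFinset.card = (free θ x y (i + κB) ∪ V' θ (i + κB)).ncard :=
          (Set.ncard_eq_toFinset_card _ hSfin).symm
        omega
      set k := Nat.count p u + 1 with hkdef
      have hnth : Nat.nth p (k - 1) = u := by
        have hh : k - 1 = Nat.count p u := by omega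
        rw [hh]
        exact Nat.nth_count hup
      have hx1k : ξ θ x y κB i 1 k = u := by rw [hxi1]; exact hnth
      by_cases hk1 : k = 1
      · refine ⟨i + κB, by omega, ?_, Or.inl ?_⟩
        · obtain ⟨hθw, -, -, -⟩ := hC (i + κB) (by omega) le_rfl (by omega)
          omega
        · obtain ⟨hθw, -, hxw, -⟩ := hC (i + κB) (by omega) le_rfl (by omega)
          have h0 : i + κB - (i + κB) = 0 := by omega
          rw [h0, Nat.zero_div, Nat.zero_mod] at hxw
          have h1 : max 1 0 = 1 := rfl
          rw [h1] at hxw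
          have h2 : (1 : ℕ) + 0 = 1 := rfl
          rw [h2] at hxw
          rw [hk1] at hx1k
          rw [hxw]
          exact hx1k
      · have hk2 : 2 ≤ k := by omega
        have hwC : i + κB + (k - 2) ≤ i + κC := by omega
        obtain ⟨hθw, -, -, hyw⟩ := hC (i + κB + (k - 2)) (by omega) (by omega) hwC
        refine ⟨i + κB + (k - 2), by omega, by omega, Or.inr ?_⟩
        have h1 : i + κB + (k - 2) - (i + κB) = k - 2 := by omega
        rw [h1, Nat.div_eq_of_lt (by omega), Nat.mod_eq_of_lt (by omega)] at hyw
        have h2 : min (k - 2 + 2) c = k := by omega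
        have h3 : (1 : ℕ) + 0 = 1 := rfl
        rw [h3, h2] at hyw
        rw [hyw]
        exact hx1k
    -- ## coverage: late tips below i + κC lie in row ≥ 2c
    have cover : ∀ n u, i + κB + 2 * (c * c) + h M + 1 ≤ n → u ∈ tips θ x y n →
        u ≤ i + κC → i + κB + (2 * c - 2) * c ≤ u := by
      intro n u hn hu huC
      by_contra hrow
      push_neg at hrow
      obtain ⟨huV, hnoe⟩ := hu
      simp only [V, Set.mem_union, Set.mem_singleton_iff, Set.mem_setOf_eq] at huV
      rcases huV with rfl | ⟨hu1, huθn⟩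
      · -- u = 0 : vertex 1 points to it
        have hx1 := (hvalid 1 le_rfl).1
        have he1 : 1 ≤ e 1 := le_trans hεmin1 (hemin 1 le_rfl)
        have h10 : 1 - e 1 = 0 := by omega
        rw [h10] at hx1
        obtain ⟨hV0, -⟩ := hx1
        simp only [V, Set.mem_union, Set.mem_singleton_iff, Set.mem_setOf_eq] at hV0
        have hx10 : x 1 = 0 := by omega
        have hθ1 := hθle 1 le_rfl
        exact hnoe 1 ⟨1, le_rfl, by omega, Or.inl (by rw [hx10])⟩
      · rcases lt_or_ge (u + θ u) (i + κB) with hearly | hlate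
        · by_cases htip : u ∈ tips θ x y (i + κB)
          · by_cases hfree : u ∈ free θ x y (i + κB)
            · obtain ⟨w, hw1, hwθ, hwxy⟩ := childS u (Or.inl hfree)
              rcases hwxy with hxy | hxy
              · exact hnoe w ⟨w, hw1, by omega, Or.inl (by rw [hxy])⟩
              · exact hnoe w ⟨w, hw1, by omega, Or.inr (by rw [hxy])⟩
            · have hpend : u ∈ pend θ x y (i + κB) := by
                by_contra hnp
                exact hfree ⟨htip, hnp⟩
              obtain ⟨-, w, hwV', hwxy⟩ := hpend
              obtain ⟨hw1, hwlt, hwθ⟩ := hwV'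
              have hθw := hθle w hw1
              rcases hwxy with hxy | hxy
              · exact hnoe w ⟨w, hw1, by omega, Or.inl (by rw [hxy])⟩
              · exact hnoe w ⟨w, hw1, by omega, Or.inr (by rw [hxy])⟩
          · have hVu : u ∈ V θ (i + κB) := Or.inr ⟨hu1, hearly⟩
            have hne : ¬ (∀ w, (w, u) ∉ E θ x y (i + κB)) := by
              intro hall
              exact htip ⟨hVu, hall⟩
            push_neg at hne
            obtain ⟨w, hw⟩ := hne
            obtain ⟨k', hk1, hk2, hk3⟩ := hw
            exact hnoe w ⟨k', hk1, by omega, hk3⟩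
        · rcases lt_or_ge u (i + κB) with hub | hub
          · obtain ⟨w, hw1, hwθ, hwxy⟩ := childS u (Or.inr ⟨hu1, hub, hlate⟩)
            rcases hwxy with hxy | hxy
            · exact hnoe w ⟨w, hw1, by omega, Or.inl (by rw [hxy])⟩
            · exact hnoe w ⟨w, hw1, by omega, Or.inr (by rw [hxy])⟩
          · -- StepC vertex strictly below row 2c
            obtain ⟨m, rfl⟩ : ∃ m, u = i + κB + m := ⟨u - (i + κB), by omega⟩
            obtain ⟨q, r, hqr, hrlt⟩ : ∃ q r, m = q * c + r ∧ r < c :=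
              ⟨m / c, m % c, by rw [mul_comm]; exact (Nat.div_add_mod m c).symm,
                Nat.mod_lt _ hc0⟩
            subst hqr
            have hq1c : (q + 1) * c = q * c + c := by ring
            have hqlt : q < 2 * c - 2 := by
              by_contra hq2
              push_neg at hq2
              have h1 : (2 * c - 2) * c ≤ q * c := Nat.mul_le_mul_right c hq2
              omega
            have hB2 : (q + 1) * c ≤ (2 * c - 2) * c := Nat.mul_le_mul_right c (by omega)
            obtain ⟨w, hwdef⟩ : ∃ w, w = i + κB + (q + 1) * c + (r - 1) := ⟨_, rfl⟩
            have hwC : w ≤ i + κC := by omega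
            obtain ⟨hθw, -, hxw, hyw⟩ := hC w (by omega) (by omega) hwC
            have hsub : w - (i + κB) = (q + 1) * c + (r - 1) := by omega
            obtain ⟨hdiv, hmod⟩ := divmod (q + 1) (r - 1) (by omega)
            rw [hsub, hdiv, hmod] at hxw hyw
            have hwn : w + θ w < n := by rw [hθw]; omega
            have hw1 : 1 ≤ w := by omega
            by_cases hm0 : r = 0
            · have hfix : max 1 (r - 1) = 1 := by omega
              rw [hfix] at hxw
              have hueq : ξ θ x y κB i (1 + (q + 1)) 1 = i + κB + (q * c + r) := by
                rw [hxiv (1 + (q + 1)) 1 (by omega)]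
                have h5 : 1 + (q + 1) - 2 = q := by omega
                rw [h5]
                omega
              exact hnoe w ⟨w, hw1, hwn, Or.inl (by rw [hxw, hueq])⟩
            · have h7 : min (r - 1 + 2) c = r + 1 := by omega
              rw [h7] at hyw
              have hueq : ξ θ x y κB i (1 + (q + 1)) (r + 1) = i + κB + (q * c + r) := by
                rw [hxiv (1 + (q + 1)) (r + 1) (by omega)]
                have h5 : 1 + (q + 1) - 2 = q := by omega
                rw [h5]
                omega
              exact hnoe w ⟨w, hw1, hwn, Or.inr (by rw [hyw, hueq])⟩
    -- ## descent: StepC vertices in rows ≥ 2c reach row 2c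
    have desc : ∀ u, i + κB ≤ u → u ≤ i + κC → i + κB + (2 * c - 2) * c ≤ u →
        ∃ k, 1 ≤ k ∧ k ≤ c ∧ Reach x y u (ξ θ x y κB i (2 * c) k) := by
      intro u
      induction u using Nat.strong_induction_on with
      | _ u ih =>
      intro hub huC hurow
      obtain ⟨m, rfl⟩ : ∃ m, u = i + κB + m := ⟨u - (i + κB), by omega⟩
      obtain ⟨q, r, hqr, hrlt⟩ : ∃ q r, m = q * c + r ∧ r < c :=
        ⟨m / c, m % c, by rw [mul_comm]; exact (Nat.div_add_mod m c).symm,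
          Nat.mod_lt _ hc0⟩
      subst hqr
      have hq1c : (q + 1) * c = q * c + c := by ring
      have h3c : (2 * c - 2) * c + c = (2 * c - 1) * c := by
        have h4 : 2 * c - 2 + 1 = 2 * c - 1 := by omega
        calc (2 * c - 2) * c + c = (2 * c - 2 + 1) * c := by ring
          _ = (2 * c - 1) * c := by rw [h4]
      by_cases hsmall : q * c + r < (2 * c - 1) * c
      · refine ⟨r + 1, by omega, by omega, ?_⟩
        have hqeq : q = 2 * c - 2 := by
          by_contra hne
          rcases Nat.lt_or_ge q (2 * c - 2) with hlt | hge
          · have h1 : (q + 1) * c ≤ (2 * c - 2) * c := Nat.mul_le_mul_right c (by omega)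
            omega
          · have hge' : 2 * c - 1 ≤ q := by omega
            have h1 : (2 * c - 1) * c ≤ q * c := Nat.mul_le_mul_right c hge'
            omega
        have hueq : ξ θ x y κB i (2 * c) (r + 1) = i + κB + (q * c + r) := by
          rw [hxiv (2 * c) (r + 1) (by omega), ← hqeq]
          omega
        rw [hueq]
        exact Relation.ReflTransGen.refl
      · obtain ⟨hθu, -, hxu, -⟩ := hC (i + κB + (q * c + r)) (by omega) hub huC
        have hsub : i + κB + (q * c + r) - (i + κB) = q * c + r := by omega
        obtain ⟨hdiv, hmod⟩ := divmod q r hrlt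
        rw [hsub, hdiv, hmod] at hxu
        have hq2c : 2 * c - 1 ≤ q := by
          by_contra hh
          push_neg at hh
          have h1 : (q + 1) * c ≤ (2 * c - 1) * c := Nat.mul_le_mul_right c (by omega)
          omega
        have hpe : ξ θ x y κB i (1 + q) (max 1 r) = i + κB - 1 + (q - 1) * c + max 1 r := by
          rw [hxiv (1 + q) (max 1 r) (by omega)]
          have h5 : 1 + q - 2 = q - 1 := by omega
          rw [h5]
        have h2 : (q - 1) * c + c = q * c := by
          have h5 : q - 1 + 1 = q := by omega
          calc (q - 1) * c + c = (q - 1 + 1) * c := by ring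
            _ = q * c := by rw [h5]
        have h6 : (2 * c - 1) * c ≤ q * c := Nat.mul_le_mul_right c hq2c
        have h7 : (2 * c - 2) * c ≤ (q - 1) * c := Nat.mul_le_mul_right c (by omega)
        have hmaxle : max 1 r ≤ c := by omega
        have hplt : ξ θ x y κB i (1 + q) (max 1 r) < i + κB + (q * c + r) := by
          rw [hpe]; omega
        have hpb : i + κB ≤ ξ θ x y κB i (1 + q) (max 1 r) := by
          rw [hpe]; omega
        have hprow : i + κB + (2 * c - 2) * c ≤ ξ θ x y κB i (1 + q) (max 1 r) := by
          rw [hpe]; omega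
        obtain ⟨k, hk1, hkc, hreach⟩ := ih _ hplt hpb (by omega) hprow
        exact ⟨k, hk1, hkc, Relation.ReflTransGen.head ⟨by omega, Or.inl hxu⟩ hreach⟩
    -- ## main induction: every vertex past i + κC reaches row 2c
    have main : ∀ v, i + κC < v →
        ∃ k, 1 ≤ k ∧ k ≤ c ∧ Reach x y v (ξ θ x y κB i (2 * c) k) := by
      intro v
      induction v using Nat.strong_induction_on with
      | _ v ih =>
      intro hv
      have hv1 : 1 ≤ v := by omega
      obtain ⟨hxvt, -⟩ := hvalid v hv1
      have hevX : e v ≤ Iε.max' hIε := hemax v hv1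
      have hnT : i + κB + 2 * (c * c) + h M + 1 ≤ v - e v := by omega
      rcases le_or_gt (x v) (i + κC) with hle | hgt
      · have hrow := cover (v - e v) (x v) hnT hxvt hle
        have hxb : i + κB ≤ x v := by omega
        obtain ⟨k, hk1, hkc, hr⟩ := desc (x v) hxb hle hrow
        exact ⟨k, hk1, hkc, Relation.ReflTransGen.head ⟨hv1, Or.inl rfl⟩ hr⟩
      · obtain ⟨hxV, -⟩ := hxvt
        simp only [V, Set.mem_union, Set.mem_singleton_iff, Set.mem_setOf_eq] at hxV
        have hxlt : x v < v := by
          rcases hxV with h0 | ⟨-, hlt⟩ <;> omega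
        obtain ⟨k, hk1, hkc, hr⟩ := ih (x v) hxlt hgt
        exact ⟨k, hk1, hkc, Relation.ReflTransGen.head ⟨hv1, Or.inl rfl⟩ hr⟩
    -- ## конclusion
    refine ⟨fun v hv => main v hv, fun v hv k' hk1' hkc' => ?_⟩
    obtain ⟨k, hk1, hkc, hr⟩ := main v hv
    exact hr.trans (part2 k k' hk1 hkc hk1' hkc')
end
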